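/- arXiv:1502.05732 — 9 statements merged into one kernel-verified Lean document; each statement's English description precedes it below -/
import Mathlib

section
/- For every measurable function f : (0,∞) → [0,∞] and every x > 0 one has the identities Cf(x) + C*f(x) = C*(Cf)(x) and Cf(x) + C*f(x) = C(C*f)(x), where all integrals are taken in the extended nonnegative reals. -/
/-! Both iterated operators are integral operators against an explicit kernel. By Tonelli,
`C*(Cf)(x) = ∫₀^∞ f(s) · ∫_{max(x,s)}^∞ t⁻² dt ds = ∫₀^∞ f(s) / max(x,s) ds` and
`C(C*f)(x) = (1/x) ∫₀^∞ (f(s)/s) · |(0, min(x,s))| ds`; splitting the outer integral at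
`s = x` turns both into `Cf(x) + C*f(x)`. -/

open MeasureTheory Set

/-- The Cesàro operator `Cf(x) = (1/x)∫_0^x f(t) dt`, with values in `[0,∞]`. -/
noncomputable def cesaro (f : ℝ → ENNReal) (x : ℝ) : ENNReal :=
  (∫⁻ t in Set.Ioo 0 x, f t) / ENNReal.ofReal x

/-- The Copson operator `C*f(x) = ∫_x^∞ f(t)/t dt`, with values in `[0,∞]`. -/
noncomputable def copson (f : ℝ → ENNReal) (x : ℝ) : ENNReal :=
  ∫⁻ t in Set.Ioi x, f t / ENNReal.ofReal t

open scoped ENNReal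

lemma lintegral_Ioi_inv_sq {a : ℝ} (ha : 0 < a) :
    ∫⁻ t in Ioi a, (ENNReal.ofReal t)⁻¹ ^ 2 = (ENNReal.ofReal a)⁻¹ := by
  have h_rpow : ∀ t ∈ Ioi a,
      (ENNReal.ofReal t)⁻¹ ^ 2 = ENNReal.ofReal (t ^ (-2 : ℝ)) := by
    intro t ht
    have ht0 : 0 < t := ha.trans ht
    rw [Real.rpow_neg ht0.le, Real.rpow_two, ENNReal.ofReal_inv_of_pos (by positivity),
      ENNReal.ofReal_pow ht0.le, ENNReal.inv_pow]
  rw [setLIntegral_congr_fun measurableSet_Ioi h_rpow,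
    ← ofReal_integral_eq_lintegral_ofReal (integrableOn_Ioi_rpow_of_lt (by norm_num) ha)
      (ae_restrict_of_forall_mem measurableSet_Ioi fun t ht => Real.rpow_nonneg (ha.trans ht).le _),
    integral_Ioi_rpow_of_lt (by norm_num) ha]
  norm_num [Real.rpow_neg_one, ENNReal.ofReal_inv_of_pos ha]

lemma lintegral_Ioi_indicator_Ioi_inv_sq {x : ℝ} (hx : 0 < x) (s : ℝ) :
    ∫⁻ t in Ioi x, (Ioi s).indicator (fun t => (ENNReal.ofReal t)⁻¹ ^ 2) t
      = (ENNReal.ofReal (max x s))⁻¹ := by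
  rw [lintegral_indicator measurableSet_Ioi, Measure.restrict_restrict measurableSet_Ioi,
    Ioi_inter_Ioi, sup_comm, lintegral_Ioi_inv_sq (lt_max_of_lt_left hx)]

lemma lintegral_Ioo_indicator_Iio_const (x s : ℝ) (c : ℝ≥0∞) :
    ∫⁻ t in Ioo 0 x, (Iio s).indicator (fun _ => c) t = c * ENNReal.ofReal (min x s) := by
  have h_inter : Iio s ∩ Ioo 0 x = Ioo 0 (min x s) := by
    ext t
    simp only [mem_inter_iff, mem_Iio, mem_Ioo, lt_min_iff]
    tauto
  rw [lintegral_indicator_const measurableSet_Iio, Measure.restrict_apply measurableSet_Iio,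
    h_inter, Real.volume_Ioo, sub_zero]

lemma lintegral_lintegral_indicator_Iio_swap {μ ν : Measure ℝ} [SFinite μ] [SFinite ν]
    {F : ℝ → ℝ → ℝ≥0∞} (hF : Measurable (Function.uncurry F)) :
    ∫⁻ t, ∫⁻ s, (Iio t).indicator (F t) s ∂ν ∂μ
      = ∫⁻ s, ∫⁻ t, (Ioi s).indicator (fun t => F t s) t ∂μ ∂ν := by
  set G := {p : ℝ × ℝ | p.2 < p.1}.indicator (Function.uncurry F)
  have hG : Measurable G := hF.indicator (measurableSet_lt measurable_snd measurable_fst)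
  calc ∫⁻ t, ∫⁻ s, (Iio t).indicator (F t) s ∂ν ∂μ
      = ∫⁻ t, ∫⁻ s, G (t, s) ∂ν ∂μ := by
        simp only [G, indicator, mem_Iio, mem_ofPred_eq, Function.uncurry_apply_pair]
    _ = ∫⁻ s, ∫⁻ t, G (t, s) ∂μ ∂ν := lintegral_lintegral_swap hG.aemeasurable
    _ = ∫⁻ s, ∫⁻ t, (Ioi s).indicator (fun t => F t s) t ∂μ ∂ν := by
        simp only [G, indicator, mem_Ioi, mem_ofPred_eq, Function.uncurry_apply_pair]

lemma lintegral_Ioi_eq_Ioo_add_Ioi {μ : Measure ℝ} [NullSingletonClass μ] {a b : ℝ}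
    (hab : a ≤ b) (g : ℝ → ℝ≥0∞) :
    ∫⁻ s in Ioi a, g s ∂μ
      = ∫⁻ s in Ioo a b, g s ∂μ + ∫⁻ s in Ioi b, g s ∂μ := by
  rw [← Ioc_union_Ioi_eq_Ioi hab, lintegral_union measurableSet_Ioi Ioc_disjoint_Ioi_same,
    Measure.restrict_congr_set Ioo_ae_eq_Ioc]

theorem copson_cesaro {f : ℝ → ℝ≥0∞} (hf : Measurable f) {x : ℝ} (hx : 0 < x) :
    copson (cesaro f) x = cesaro f x + copson f x := by
  set F : ℝ → ℝ → ℝ≥0∞ := fun t s => f s * (ENNReal.ofReal t)⁻¹ ^ 2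
  have hF : Measurable (Function.uncurry F) :=
    (hf.comp measurable_snd).mul ((ENNReal.measurable_ofReal.comp measurable_fst).inv.pow_const 2)
  have h_cesaro_div : ∀ t,
      cesaro f t / ENNReal.ofReal t = ∫⁻ s in Ioi 0, (Iio t).indicator (F t) s := by
    intro t
    rw [lintegral_indicator measurableSet_Iio, Measure.restrict_restrict measurableSet_Iio,
      Iio_inter_Ioi, lintegral_mul_const _ hf, cesaro, div_eq_mul_inv, div_eq_mul_inv, mul_assoc,
      sq]
  have h_inner : ∀ s, ∫⁻ t in Ioi x, (Ioi s).indicator (fun t => F t s) t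
      = f s * (ENNReal.ofReal (max x s))⁻¹ := by
    intro s
    have h_inv_sq : Measurable fun t : ℝ => (ENNReal.ofReal t)⁻¹ ^ 2 := by fun_prop
    simp only [F, indicator_mul_right]
    rw [lintegral_const_mul _ (h_inv_sq.indicator measurableSet_Ioi),
      lintegral_Ioi_indicator_Ioi_inv_sq hx]
  calc copson (cesaro f) x
      = ∫⁻ s in Ioi 0, f s * (ENNReal.ofReal (max x s))⁻¹ := by
        simp only [copson, h_cesaro_div, lintegral_lintegral_indicator_Iio_swap hF, h_inner]
    _ = cesaro f x + copson f x := by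
        rw [lintegral_Ioi_eq_Ioo_add_Ioi hx.le, cesaro, copson, div_eq_mul_inv,
          ← lintegral_mul_const _ hf]
        congr 1
        · exact setLIntegral_congr_fun measurableSet_Ioo fun s hs => by
            rw [max_eq_left hs.2.le]
        · exact setLIntegral_congr_fun measurableSet_Ioi fun s hs => by
            rw [max_eq_right hs.le, div_eq_mul_inv]

theorem cesaro_copson {f : ℝ → ℝ≥0∞} (hf : Measurable f) {x : ℝ} (hx : 0 < x) :
    cesaro (copson f) x = cesaro f x + copson f x := by
  set g : ℝ → ℝ≥0∞ := fun s => f s / ENNReal.ofReal s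
  have hg : Measurable g := hf.div ENNReal.measurable_ofReal
  have h_copson : ∀ t ∈ Ioo 0 x, copson f t = ∫⁻ s in Ioi 0, (Ioi t).indicator g s := by
    intro t ht
    rw [lintegral_indicator measurableSet_Ioi, Measure.restrict_restrict measurableSet_Ioi,
      inter_eq_left.mpr (Ioi_subset_Ioi ht.1.le), copson]
  have hx0 : ENNReal.ofReal x ≠ 0 := by simp [hx]
  calc cesaro (copson f) x
      = (∫⁻ s in Ioi 0, g s * ENNReal.ofReal (min x s)) / ENNReal.ofReal x := by
        rw [cesaro, setLIntegral_congr_fun measurableSet_Ioo h_copson,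
          ← lintegral_lintegral_indicator_Iio_swap (F := fun s _ => g s)
            (hg.comp measurable_fst)]
        simp only [lintegral_Ioo_indicator_Iio_const]
    _ = cesaro f x + copson f x := by
        rw [lintegral_Ioi_eq_Ioo_add_Ioi hx.le, ENNReal.add_div, cesaro, copson]
        congr 1
        · rw [setLIntegral_congr_fun measurableSet_Ioo fun s hs => by
            rw [min_eq_right hs.2.le,
              ENNReal.div_mul_cancel (by simp [hs.1]) ENNReal.ofReal_ne_top]]
        · rw [setLIntegral_congr_fun measurableSet_Ioi fun s hs => by rw [min_eq_left hs.le],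
            lintegral_mul_const _ hg, ENNReal.mul_div_cancel_right hx0 ENNReal.ofReal_ne_top]

/-- For every measurable `f : (0,∞) → [0,∞]` and every `x > 0` one has
`Cf(x) + C*f(x) = C*(Cf)(x)` and `Cf(x) + C*f(x) = C(C*f)(x)`. -/
theorem stmt1 (f : ℝ → ENNReal) (hf : Measurable f) (x : ℝ) (hx : 0 < x) :
    cesaro f x + copson f x = copson (cesaro f) x ∧
    cesaro f x + copson f x = cesaro (copson f) x :=
  ⟨(copson_cesaro hf hx).symm, (cesaro_copson hf hx).symm⟩
end

section
/- Let f : (0,1) → [0,∞) be Lebesgue integrable. Then for every x ∈ (0,1) one has C*(Cf)(x) = Cf(x) + C*f(x) − ∫_0^1 f(t) dt, where on (0,1) the operators are Cf(x) = (1/x)∫_0^x f(t) dt and C*f(x) = ∫_x^1 f(t)/t dt. -/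
/-!
Fubini on the triangle `{s < t}` turns `C*(Cf)(x) = ∫_x^1 t⁻² ∫_0^t f(s) ds dt` into
`∫_0^1 f(s) ∫_{max(x,s)}^1 t⁻² dt ds = ∫_0^1 f(s) (1 / max(x,s) - 1) ds`; splitting the last
integral at `s = x` gives `Cf(x) + C*f(x) - ∫_0^1 f`.
-/

open MeasureTheory Set

/-- The Cesàro operator on `(0,1)`: `Cf(x) = (1/x)∫_0^x f(t) dt`. -/
noncomputable def cesaro01 (f : ℝ → ℝ) (x : ℝ) : ℝ :=
  (1 / x) * ∫ t in Set.Ioo 0 x, f t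

/-- The Copson operator on `(0,1)`: `C*f(x) = ∫_x^1 f(t)/t dt`. -/
noncomputable def copson01 (f : ℝ → ℝ) (x : ℝ) : ℝ :=
  ∫ t in Set.Ioo x 1, f t / t

lemma integrableOn_Ioo_inv_sq {a b : ℝ} (ha : 0 < a) :
    IntegrableOn (fun t : ℝ => (t ^ 2)⁻¹) (Ioo a b) :=
  ((continuousOn_pow 2).inv₀ fun t ht => by have := ha.trans_le ht.1; positivity).integrableOn_Icc
    |>.mono_set Ioo_subset_Icc_self

lemma integral_Ioo_inv_sq {a b : ℝ} (ha : 0 < a) (hab : a ≤ b) :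
    ∫ t in Ioo a b, (t ^ 2)⁻¹ = a⁻¹ - b⁻¹ := by
  have h0 : (0 : ℝ) ∉ uIcc a b := by
    rw [uIcc_of_le hab]
    exact fun h => h.1.not_gt ha
  have hzpow := integral_zpow (n := -2) (Or.inr ⟨by norm_num, h0⟩)
  rw [← integral_Ioc_eq_integral_Ioo, ← intervalIntegral.integral_of_le hab]
  simp only [zpow_neg, zpow_ofNat] at hzpow
  rw [hzpow]
  norm_num
  ring

lemma setIntegral_Ioo_eq_add {g : ℝ → ℝ} {a b x : ℝ} (hax : a ≤ x) (hxb : x ≤ b)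
    (hg : IntegrableOn g (Ioo a b)) :
    ∫ s in Ioo a b, g s = (∫ s in Ioo a x, g s) + ∫ s in Ioo x b, g s := by
  have hg' := (integrableOn_Ioc_iff_integrableOn_Ioo).2 hg
  simp only [← integral_Ioc_eq_integral_Ioo]
  rw [← Ioc_union_Ioc_eq_Ioc hax hxb, setIntegral_union (Ioc_disjoint_Ioc_of_le le_rfl)
    measurableSet_Ioc (hg'.mono_set (Ioc_subset_Ioc_right hxb))
    (hg'.mono_set (Ioc_subset_Ioc_left hax))]

lemma integral_Ioo_mul_integral_Ioo_swap {f g : ℝ → ℝ} {a b c : ℝ}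
    (hg : IntegrableOn g (Ioo a b)) (hf : IntegrableOn f (Ioo c b)) :
    ∫ t in Ioo a b, g t * ∫ s in Ioo c t, f s =
      ∫ s in Ioo c b, f s * ∫ t in Ioo (max a s) b, g t := by
  set F : ℝ → ℝ → ℝ := fun t s =>
    {p : ℝ × ℝ | p.2 < p.1}.indicator (fun p => g p.1 * f p.2) (t, s)
  have hF : Integrable (Function.uncurry F)
      ((volume.restrict (Ioo a b)).prod (volume.restrict (Ioo c b))) :=
    (hg.mul_prod hf).indicator (measurableSet_lt measurable_snd measurable_fst)
  have integral_F_left : ∀ t ∈ Ioo a b, ∫ s in Ioo c b, F t s = g t * ∫ s in Ioo c t, f s := by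
    intro t ht
    have hFt : ∀ s, F t s = (Iio t).indicator (fun s => g t * f s) s := fun s => by
      simp only [F, indicator_apply, mem_ofPred_eq, mem_Iio]
    simp_rw [hFt]
    rw [setIntegral_indicator measurableSet_Iio, Ioo_inter_Iio, min_eq_right ht.2.le,
      integral_const_mul]
  have integral_F_right : ∀ s ∈ Ioo c b,
      ∫ t in Ioo a b, F t s = f s * ∫ t in Ioo (max a s) b, g t := by
    intro s _
    have hFs : ∀ t, F t s = (Ioi s).indicator (fun t => f s * g t) t := fun t => by
      simp only [F, indicator_apply, mem_ofPred_eq, mem_Ioi, mul_comm]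
    simp_rw [hFs]
    rw [setIntegral_indicator measurableSet_Ioi, Ioo_inter_Ioi, integral_const_mul]
  rw [← setIntegral_congr_fun measurableSet_Ioo integral_F_left, integral_integral_swap hF,
    setIntegral_congr_fun measurableSet_Ioo integral_F_right]

lemma integrableOn_div_max {f : ℝ → ℝ} {s : Set ℝ} {x : ℝ} (hf : IntegrableOn f s) (hx : 0 < x) :
    IntegrableOn (fun t => f t / max x t) s := by
  refine hf.mul_bdd (c := x⁻¹) (measurable_const.max measurable_id).inv.aestronglyMeasurable
    (ae_of_all _ fun t => ?_)
  rw [norm_inv, Real.norm_of_nonneg (hx.le.trans (le_max_left x t))]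
  exact inv_anti₀ hx (le_max_left x t)

lemma integral_Ioo_div_max {f : ℝ → ℝ} {a b x : ℝ} (hf : IntegrableOn f (Ioo a b))
    (hx : 0 < x) (hax : a ≤ x) (hxb : x ≤ b) :
    ∫ s in Ioo a b, f s / max x s = (∫ s in Ioo a x, f s) / x + ∫ s in Ioo x b, f s / s := by
  rw [setIntegral_Ioo_eq_add hax hxb (integrableOn_div_max hf hx), ← integral_div]
  congr 1 <;> refine setIntegral_congr_fun measurableSet_Ioo fun s hs => ?_
  · rw [max_eq_left hs.2.le]
  · rw [max_eq_right hs.1.le]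

theorem stmt2_general (f : ℝ → ℝ) (hf : IntegrableOn f (Set.Ioo 0 1))
    (x : ℝ) (hx : x ∈ Set.Ioo (0:ℝ) 1) :
    copson01 (cesaro01 f) x = cesaro01 f x + copson01 f x - ∫ t in Set.Ioo (0:ℝ) 1, f t := by
  obtain ⟨hx0, hx1⟩ := hx
  have kernel : ∀ s ∈ Ioo (0:ℝ) 1,
      f s * ∫ t in Ioo (max x s) 1, (t ^ 2)⁻¹ = f s / max x s - f s := fun s hs => by
    rw [integral_Ioo_inv_sq (lt_max_of_lt_left hx0) (max_le hx1.le hs.2.le)]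
    ring
  calc copson01 (cesaro01 f) x = ∫ t in Ioo x 1, (t ^ 2)⁻¹ * ∫ s in Ioo 0 t, f s :=
        setIntegral_congr_fun measurableSet_Ioo fun t _ => by rw [cesaro01]; ring
    _ = ∫ s in Ioo 0 1, f s * ∫ t in Ioo (max x s) 1, (t ^ 2)⁻¹ :=
        integral_Ioo_mul_integral_Ioo_swap (integrableOn_Ioo_inv_sq hx0) hf
    _ = ∫ s in Ioo 0 1, (f s / max x s - f s) := setIntegral_congr_fun measurableSet_Ioo kernel
    _ = cesaro01 f x + copson01 f x - ∫ t in Ioo 0 1, f t := by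
        rw [integral_sub (integrableOn_div_max hf hx0) hf,
          integral_Ioo_div_max hf hx0 hx0.le hx1.le, cesaro01, copson01]
        ring

/-- For `f : (0,1) → [0,∞)` Lebesgue integrable and `x ∈ (0,1)`,
`C*(Cf)(x) = Cf(x) + C*f(x) − ∫_0^1 f(t) dt`. -/
theorem stmt2 (f : ℝ → ℝ) (hf : IntegrableOn f (Set.Ioo 0 1))
    (hf0 : ∀ t ∈ Set.Ioo (0:ℝ) 1, 0 ≤ f t)
    (x : ℝ) (hx : x ∈ Set.Ioo (0:ℝ) 1) :
    copson01 (cesaro01 f) x = cesaro01 f x + copson01 f x - ∫ t in Set.Ioo (0:ℝ) 1, f t :=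
  stmt2_general f hf x hx
end

section
/- Let 1 < p < ∞ and let f : (0,1) → ℝ be measurable. Then C*|f| ∈ L^p(0,1) if and only if both C|f| ∈ L^p(0,1) and f ∈ L^1(0,1). (That is, the Copson space C*(L^p)[0,1] coincides with C(L^p)[0,1] ∩ L^1[0,1].) -/
/-!
Write `H g x = x⁻¹ ∫₀ˣ g` and `C* g x = ∫ₓ¹ g t / t dt`, so `C|f| = H|f|`. On `(0,1)` both
satisfy the sharp bounds `‖H g‖_p ≤ p' ‖g‖_p` (Hardy) and `‖C* g‖_p ≤ p ‖g‖_p` (Copson): `C*`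
has the transposed kernel of `H`, and Schur's test with the test function `t ^ (-1/(p p'))`
applies to both.

Fubini gives `∫₀ˣ g ≤ ∫₀ˣ C* g`; hence `H g ≤ H (C* g)`, and at `x = 1`,
`‖g‖₁ ≤ ‖C* g‖₁ ≤ ‖C* g‖_p`. Conversely, `1/s = 1 + ∫ₛ¹ t⁻² dt` and Fubini give
`C* g ≤ ‖g‖₁ + C* (H g)`.
-/

open MeasureTheory Set

/-- The Cesàro operator on `(0,1)` applied to `|f|`, with values in `[0,∞]`. -/
noncomputable def cesaroAbs (f : ℝ → ℝ) (x : ℝ) : ENNReal :=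
  (∫⁻ t in Set.Ioo 0 x, ENNReal.ofReal |f t|) / ENNReal.ofReal x

/-- The Copson operator on `(0,1)` applied to `|f|`, with values in `[0,∞]`. -/
noncomputable def copsonAbs (f : ℝ → ℝ) (x : ℝ) : ENNReal :=
  ∫⁻ t in Set.Ioo x 1, ENNReal.ofReal |f t| / ENNReal.ofReal t

open ENNReal

section

variable {α β : Type*} [MeasurableSpace α] [MeasurableSpace β] {p q : ℝ}

theorem ENNReal.rpow_sub_one_mul_self (x : ℝ≥0∞) (hp : 1 ≤ p) : x ^ (p - 1) * x = x ^ p :=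
  calc x ^ (p - 1) * x = x ^ (p - 1) * x ^ (1 : ℝ) := by rw [rpow_one]
    _ = x ^ p := by rw [← rpow_add_of_nonneg _ _ (sub_nonneg.2 hp) zero_le_one, sub_add_cancel]

theorem ENNReal.rpow_neg_inv_mul_inv_rpow (hpq : p.HolderConjugate q) (x : ℝ≥0∞) :
    (x ^ (-(p⁻¹ * q⁻¹))) ^ q = x ^ (-p⁻¹) := by
  rw [← rpow_mul]
  field_simp [hpq.symm.ne_zero]

theorem ENNReal.rpow_neg_inv_mul_inv_rpow' (hpq : p.HolderConjugate q) (x : ℝ≥0∞) :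
    (x ^ (-(p⁻¹ * q⁻¹))) ^ p = x ^ (-q⁻¹) := by
  rw [mul_comm p⁻¹]
  exact rpow_neg_inv_mul_inv_rpow hpq.symm x

theorem lintegral_lt_top_of_lintegral_rpow_lt_top {μ : Measure α} [IsFiniteMeasure μ]
    (hp : 1 ≤ p) {g : α → ℝ≥0∞} (hg : ∫⁻ x, g x ^ p ∂μ < ∞) : ∫⁻ x, g x ∂μ < ∞ := by
  have hle (x : α) : g x ≤ 1 + g x ^ p := by
    rcases le_total (g x) 1 with h | h
    · exact h.trans le_self_add
    · calc g x = g x ^ (1 : ℝ) := (rpow_one _).symm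
        _ ≤ g x ^ p := rpow_le_rpow_of_exponent_le h hp
        _ ≤ 1 + g x ^ p := le_add_self
  calc ∫⁻ x, g x ∂μ ≤ ∫⁻ x, 1 + g x ^ p ∂μ := lintegral_mono hle
    _ = μ univ + ∫⁻ x, g x ^ p ∂μ := by
        rw [lintegral_add_left measurable_const, lintegral_const, one_mul]
    _ < ∞ := add_lt_top.2 ⟨measure_lt_top _ _, hg⟩

theorem lintegral_mul_rpow_le_weighted {ν : Measure β} (hpq : p.HolderConjugate q)
    {k g φ : β → ℝ≥0∞} (hk : AEMeasurable k ν) (hg : AEMeasurable g ν) (hφ : AEMeasurable φ ν)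
    (hφ_ne : ∀ᵐ t ∂ν, φ t ≠ 0 ∧ φ t ≠ ∞) :
    (∫⁻ t, k t * g t ∂ν) ^ p ≤
      (∫⁻ t, k t * φ t ^ q ∂ν) ^ (p - 1) * ∫⁻ t, k t * (g t / φ t) ^ p ∂ν := by
  have hp := hpq.pos
  have hq := hpq.symm.pos
  have hsplit : ∫⁻ t, k t * g t ∂ν =
      ∫⁻ t, ((fun t ↦ k t ^ p⁻¹ * (g t / φ t)) * fun t ↦ k t ^ q⁻¹ * φ t) t ∂ν := by
    refine lintegral_congr_ae ?_
    filter_upwards [hφ_ne] with t ⟨h0, htop⟩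
    calc k t * g t = (k t ^ p⁻¹ * k t ^ q⁻¹) * (g t / φ t * φ t) := by
          rw [← rpow_add_of_nonneg _ _ hpq.inv_nonneg hpq.symm.inv_nonneg,
            hpq.inv_add_inv_eq_one, rpow_one, ENNReal.div_mul_cancel h0 htop]
      _ = _ := by simp only [Pi.mul_apply]; ring
  have hholder := lintegral_mul_le_Lp_mul_Lq ν hpq (f := fun t ↦ k t ^ p⁻¹ * (g t / φ t))
    (g := fun t ↦ k t ^ q⁻¹ * φ t) ((hk.pow_const _).mul (hg.div hφ)) ((hk.pow_const _).mul hφ)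
  have hroot (r : ℝ) (hr : 0 < r) (u v : ℝ≥0∞) : (u ^ r⁻¹ * v) ^ r = u * v ^ r := by
    rw [mul_rpow_of_nonneg _ _ hr.le, ← rpow_mul, inv_mul_cancel₀ hr.ne', rpow_one]
  simp only [hroot p hp, hroot q hq] at hholder
  calc (∫⁻ t, k t * g t ∂ν) ^ p
      ≤ ((∫⁻ t, k t * (g t / φ t) ^ p ∂ν) ^ (1 / p) * (∫⁻ t, k t * φ t ^ q ∂ν) ^ (1 / q)) ^ p :=
        rpow_le_rpow (hsplit ▸ hholder) hp.le
    _ = _ := by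
        rw [mul_rpow_of_nonneg _ _ hp.le, ← rpow_mul, ← rpow_mul, one_div_mul_cancel hp.ne',
          rpow_one, one_div_mul_eq_div, hpq.div_conj_eq_sub_one, mul_comm]

theorem lintegral_mul_rpow_le_of_lintegral_mul_rpow_le {ν : Measure β}
    (hpq : p.HolderConjugate q) {k g φ : β → ℝ≥0∞} (hk : AEMeasurable k ν)
    (hg : AEMeasurable g ν) (hφ : AEMeasurable φ ν) (hφ_ne : ∀ᵐ t ∂ν, φ t ≠ 0 ∧ φ t ≠ ∞)
    {A c : ℝ≥0∞} (hA : ∫⁻ t, k t * φ t ^ q ∂ν ≤ A * c ^ q) :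
    (∫⁻ t, k t * g t ∂ν) ^ p ≤ A ^ (p - 1) * ∫⁻ t, c ^ p * (k t * (g t / φ t) ^ p) ∂ν :=
  calc (∫⁻ t, k t * g t ∂ν) ^ p
      ≤ (∫⁻ t, k t * φ t ^ q ∂ν) ^ (p - 1) * ∫⁻ t, k t * (g t / φ t) ^ p ∂ν :=
        lintegral_mul_rpow_le_weighted hpq hk hg hφ hφ_ne
    _ ≤ (A * c ^ q) ^ (p - 1) * ∫⁻ t, k t * (g t / φ t) ^ p ∂ν := by
        gcongr
        exact hpq.sub_one_pos.le
    _ = A ^ (p - 1) * (c ^ p * ∫⁻ t, k t * (g t / φ t) ^ p ∂ν) := by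
        rw [mul_rpow_of_nonneg _ _ hpq.sub_one_pos.le, ← rpow_mul, mul_comm q,
          hpq.sub_one_mul_conj, mul_assoc]
    _ = A ^ (p - 1) * ∫⁻ t, c ^ p * (k t * (g t / φ t) ^ p) ∂ν := by
        rw [lintegral_const_mul'' _ (f := fun t ↦ k t * (g t / φ t) ^ p)
          (hk.mul ((hg.div hφ).pow_const p))]

theorem lintegral_rpow_lintegral_mul_le_of_schur {μ : Measure α} {ν : Measure β}
    [SFinite μ] [SFinite ν] (hpq : p.HolderConjugate q) {K : α → β → ℝ≥0∞}
    (hK : Measurable (Function.uncurry K)) {φ : β → ℝ≥0∞} {ψ : α → ℝ≥0∞} (hφ : Measurable φ)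
    (hψ : Measurable ψ) (hφ_ne : ∀ᵐ t ∂ν, φ t ≠ 0 ∧ φ t ≠ ∞) {A B : ℝ≥0∞}
    (hA : ∀ᵐ x ∂μ, ∫⁻ t, K x t * φ t ^ q ∂ν ≤ A * ψ x ^ q)
    (hB : ∀ᵐ t ∂ν, ∫⁻ x, K x t * ψ x ^ p ∂μ ≤ B * φ t ^ p)
    {g : β → ℝ≥0∞} (hg : AEMeasurable g ν) :
    ∫⁻ x, (∫⁻ t, K x t * g t ∂ν) ^ p ∂μ ≤ A ^ (p - 1) * B * ∫⁻ t, g t ^ p ∂ν := by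
  have hp := hpq.pos
  set h : β → ℝ≥0∞ := fun t ↦ (g t / φ t) ^ p
  have hh : AEMeasurable h ν := (hg.div hφ.aemeasurable).pow_const p
  have hF : AEMeasurable (Function.uncurry fun x t ↦ ψ x ^ p * (K x t * h t)) (μ.prod ν) :=
    ((hψ.pow_const p).comp measurable_fst).aemeasurable.mul (hK.aemeasurable.mul hh.comp_snd)
  have hpointwise : ∀ᵐ x ∂μ,
      (∫⁻ t, K x t * g t ∂ν) ^ p ≤ A ^ (p - 1) * ∫⁻ t, ψ x ^ p * (K x t * h t) ∂ν :=
    hA.mono fun x hx ↦ lintegral_mul_rpow_le_of_lintegral_mul_rpow_le hpq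
      (hK.comp measurable_prodMk_left).aemeasurable hg hφ.aemeasurable hφ_ne hx
  calc ∫⁻ x, (∫⁻ t, K x t * g t ∂ν) ^ p ∂μ
      ≤ ∫⁻ x, A ^ (p - 1) * ∫⁻ t, ψ x ^ p * (K x t * h t) ∂ν ∂μ := lintegral_mono_ae hpointwise
    _ = A ^ (p - 1) * ∫⁻ t, h t * ∫⁻ x, K x t * ψ x ^ p ∂μ ∂ν := by
        have hFx : AEMeasurable (fun x ↦ ∫⁻ t, ψ x ^ p * (K x t * h t) ∂ν) μ :=
          hF.lintegral_prod_right'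
        rw [lintegral_const_mul'' _ hFx, lintegral_lintegral_swap hF]
        congr 1
        refine lintegral_congr fun t ↦ ?_
        have hKt : Measurable fun x ↦ K x t * ψ x ^ p :=
          (hK.comp measurable_prodMk_right).mul (hψ.pow_const p)
        rw [← lintegral_const_mul _ hKt]
        congr 1
        ext x
        ring
    _ ≤ A ^ (p - 1) * ∫⁻ t, h t * (B * φ t ^ p) ∂ν := by
        gcongr A ^ (p - 1) * ?_
        exact lintegral_mono_ae (hB.mono fun t ht ↦ by gcongr)
    _ = A ^ (p - 1) * B * ∫⁻ t, g t ^ p ∂ν := by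
        rw [mul_assoc, ← lintegral_const_mul'' _ (hg.pow_const p)]
        congr 1
        refine lintegral_congr_ae ?_
        filter_upwards [hφ_ne] with t ⟨h0, htop⟩
        change (g t / φ t) ^ p * (B * φ t ^ p) = B * g t ^ p
        rw [div_rpow_of_nonneg _ _ hp.le, mul_left_comm, ENNReal.div_mul_cancel
          (rpow_pos (pos_iff_ne_zero.2 h0) htop).ne' (rpow_ne_top_of_nonneg hp.le htop)]

end

theorem setLIntegral_Ioo_ite_lt_left {a b x : ℝ} (hx : a ≤ x) (F : ℝ → ℝ≥0∞) :
    ∫⁻ t in Ioo a b, (if x < t then F t else 0) = ∫⁻ t in Ioo x b, F t := by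
  have hF : (fun t ↦ if x < t then F t else 0) = (Ioi x).indicator F := by
    ext t
    simp only [indicator_apply, mem_Ioi]
  rw [hF, lintegral_indicator measurableSet_Ioi, Measure.restrict_restrict measurableSet_Ioi,
    Ioi_inter_Ioo, max_eq_left hx]

theorem setLIntegral_Ioo_ite_lt_right {a b x : ℝ} (hx : x ≤ b) (F : ℝ → ℝ≥0∞) :
    ∫⁻ t in Ioo a b, (if t < x then F t else 0) = ∫⁻ t in Ioo a x, F t := by
  have hF : (fun t ↦ if t < x then F t else 0) = (Iio x).indicator F := by
    ext t
    simp only [indicator_apply, mem_Iio]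
  rw [hF, lintegral_indicator measurableSet_Iio, Measure.restrict_restrict measurableSet_Iio,
    Iio_inter_Ioo, min_eq_left hx]

theorem setLIntegral_Ioo_mul_setLIntegral_Ioo_comm {a b : ℝ} {w k : ℝ → ℝ≥0∞}
    (hw : Measurable w) (hk : Measurable k) :
    ∫⁻ x in Ioo a b, w x * ∫⁻ t in Ioo x b, k t = ∫⁻ t in Ioo a b, k t * ∫⁻ x in Ioo a t, w x := by
  have hm : Measurable (Function.uncurry fun x t : ℝ ↦ if x < t then w x * k t else 0) :=
    Measurable.ite (measurableSet_lt measurable_fst measurable_snd)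
      ((hw.comp measurable_fst).mul (hk.comp measurable_snd)) measurable_const
  calc ∫⁻ x in Ioo a b, w x * ∫⁻ t in Ioo x b, k t
      = ∫⁻ x in Ioo a b, ∫⁻ t in Ioo a b, if x < t then w x * k t else 0 :=
        setLIntegral_congr_fun measurableSet_Ioo fun x hx ↦ by
          rw [setLIntegral_Ioo_ite_lt_left hx.1.le, lintegral_const_mul _ hk]
    _ = ∫⁻ t in Ioo a b, ∫⁻ x in Ioo a b, if x < t then k t * w x else 0 := by
        rw [lintegral_lintegral_swap hm.aemeasurable]
        simp only [mul_comm]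
    _ = ∫⁻ t in Ioo a b, k t * ∫⁻ x in Ioo a t, w x :=
        setLIntegral_congr_fun measurableSet_Ioo fun t ht ↦ by
          rw [setLIntegral_Ioo_ite_lt_right ht.2.le, lintegral_const_mul _ hw]

theorem setLIntegral_Ioo_ofReal_rpow {a b c : ℝ} (ha : 0 ≤ a) (hab : a ≤ b)
    (hc : -1 < c ∨ c ≠ -1 ∧ 0 < a) :
    ∫⁻ t in Ioo a b, ENNReal.ofReal t ^ c =
      ENNReal.ofReal ((b ^ (c + 1) - a ^ (c + 1)) / (c + 1)) := by
  have hc' : -1 < c ∨ c ≠ -1 ∧ (0 : ℝ) ∉ uIcc a b := by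
    refine hc.imp_right fun ⟨hc, ha⟩ ↦ ⟨hc, ?_⟩
    rw [uIcc_of_le hab]
    exact fun h ↦ h.1.not_gt ha
  have hint : IntervalIntegrable (fun t : ℝ ↦ t ^ c) volume a b := by
    rcases hc' with hc | ⟨-, h0⟩
    · exact intervalIntegral.intervalIntegrable_rpow' hc
    · exact intervalIntegral.intervalIntegrable_rpow (Or.inr h0)
  have hnonneg : 0 ≤ᵐ[volume.restrict (Ioc a b)] fun t : ℝ ↦ t ^ c := by
    filter_upwards [ae_restrict_mem measurableSet_Ioc] with t ht
    exact Real.rpow_nonneg (ha.trans ht.1.le) c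
  calc ∫⁻ t in Ioo a b, ENNReal.ofReal t ^ c
      = ∫⁻ t in Ioc a b, ENNReal.ofReal (t ^ c) := by
        rw [setLIntegral_congr Ioo_ae_eq_Ioc]
        exact setLIntegral_congr_fun measurableSet_Ioc fun t ht ↦
          ofReal_rpow_of_pos (ha.trans_lt ht.1)
    _ = _ := by
        rw [← ofReal_integral_eq_lintegral_ofReal hint.1 hnonneg,
          ← intervalIntegral.integral_of_le hab, integral_rpow hc']

theorem ae_restrict_Ioo_ofReal_rpow_ne_zero_ne_top (r : ℝ) :
    ∀ᵐ t ∂(volume.restrict (Ioo (0 : ℝ) 1)),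
      ENNReal.ofReal t ^ r ≠ 0 ∧ ENNReal.ofReal t ^ r ≠ ∞ := by
  filter_upwards [ae_restrict_mem measurableSet_Ioo] with t ht
  exact ⟨(rpow_pos (ofReal_pos.2 ht.1) ofReal_ne_top).ne',
    rpow_ne_top_of_ne_zero (ofReal_pos.2 ht.1).ne' ofReal_ne_top⟩

noncomputable def hardyKernel (x t : ℝ) : ℝ≥0∞ := if t < x then (ENNReal.ofReal x)⁻¹ else 0

theorem measurable_hardyKernel : Measurable (Function.uncurry hardyKernel) :=
  Measurable.ite (measurableSet_lt measurable_snd measurable_fst)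
    (ENNReal.measurable_ofReal.comp measurable_fst).inv measurable_const

theorem div_ofReal_eq_setLIntegral_hardyKernel_mul {x : ℝ} (hx : x ∈ Ioo 0 1)
    (g : ℝ → ℝ≥0∞) :
    (∫⁻ t in Ioo 0 x, g t) / ENNReal.ofReal x = ∫⁻ t in Ioo 0 1, hardyKernel x t * g t := by
  simp only [hardyKernel, ite_mul, zero_mul]
  rw [setLIntegral_Ioo_ite_lt_right hx.2.le,
    lintegral_const_mul' _ _ (ENNReal.inv_ne_top.2 (ENNReal.ofReal_pos.2 hx.1).ne'),
    div_eq_mul_inv, mul_comm]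

theorem setLIntegral_div_ofReal_eq_setLIntegral_hardyKernel_mul {x : ℝ} (hx : 0 ≤ x)
    (g : ℝ → ℝ≥0∞) :
    ∫⁻ t in Ioo x 1, g t / ENNReal.ofReal t = ∫⁻ t in Ioo 0 1, hardyKernel t x * g t := by
  simp only [hardyKernel, ite_mul, zero_mul]
  rw [setLIntegral_Ioo_ite_lt_left hx]
  simp only [div_eq_mul_inv, mul_comm]

theorem setLIntegral_hardyKernel_mul_rpow {s x : ℝ} (hs : s < 1) (hx : x ∈ Ioo 0 1) :
    ∫⁻ t in Ioo 0 1, hardyKernel x t * ENNReal.ofReal t ^ (-s) =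
      ENNReal.ofReal (1 - s)⁻¹ * ENNReal.ofReal x ^ (-s) := by
  rw [← div_ofReal_eq_setLIntegral_hardyKernel_mul hx,
    setLIntegral_Ioo_ofReal_rpow le_rfl hx.1.le (Or.inl (by linarith)),
    Real.zero_rpow (by linarith), sub_zero, ofReal_rpow_of_pos hx.1,
    ← ofReal_div_of_pos hx.1, ← ofReal_mul (by simp only [inv_nonneg]; linarith)]
  congr 1
  have hs' : 1 - s ≠ 0 := by linarith
  rw [Real.rpow_add hx.1, Real.rpow_one, neg_add_eq_sub]
  field_simp [hx.1.ne']

theorem setLIntegral_hardyKernel_swap_mul_rpow_le {s x : ℝ} (hs : 0 < s) (hx : x ∈ Ioo 0 1) :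
    ∫⁻ t in Ioo 0 1, hardyKernel t x * ENNReal.ofReal t ^ (-s) ≤
      ENNReal.ofReal s⁻¹ * ENNReal.ofReal x ^ (-s) := by
  rw [← setLIntegral_div_ofReal_eq_setLIntegral_hardyKernel_mul hx.1.le]
  calc ∫⁻ t in Ioo x 1, ENNReal.ofReal t ^ (-s) / ENNReal.ofReal t
      = ∫⁻ t in Ioo x 1, ENNReal.ofReal t ^ (-s - 1) :=
        setLIntegral_congr_fun measurableSet_Ioo fun t ht ↦ by
          rw [rpow_sub _ _ (ofReal_pos.2 (hx.1.trans ht.1)).ne' ofReal_ne_top, rpow_one]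
    _ = ENNReal.ofReal ((x ^ (-s) - 1) / s) := by
        rw [setLIntegral_Ioo_ofReal_rpow hx.1.le hx.2.le (Or.inr ⟨by linarith, hx.1⟩),
          Real.one_rpow, sub_add_cancel, div_neg, ← neg_div, neg_sub]
    _ ≤ ENNReal.ofReal (s⁻¹ * x ^ (-s)) := by
        gcongr
        rw [div_eq_inv_mul]
        gcongr
        linarith
    _ = ENNReal.ofReal s⁻¹ * ENNReal.ofReal x ^ (-s) := by
        rw [ofReal_mul (inv_nonneg.2 hs.le), ofReal_rpow_of_pos hx.1]

theorem aemeasurable_setLIntegral_Ioo_zero_div_ofReal {g : ℝ → ℝ≥0∞}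
    (hg : AEMeasurable g (volume.restrict (Ioo 0 1))) :
    AEMeasurable (fun x ↦ (∫⁻ t in Ioo 0 x, g t) / ENNReal.ofReal x)
      (volume.restrict (Ioo 0 1)) := by
  have hK : AEMeasurable (fun z : ℝ × ℝ ↦ hardyKernel z.1 z.2 * g z.2)
      ((volume.restrict (Ioo 0 1)).prod (volume.restrict (Ioo 0 1))) :=
    measurable_hardyKernel.aemeasurable.mul hg.comp_snd
  refine hK.lintegral_prod_right'.congr ?_
  filter_upwards [ae_restrict_mem measurableSet_Ioo] with x hx
  exact (div_ofReal_eq_setLIntegral_hardyKernel_mul hx g).symm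

theorem aemeasurable_setLIntegral_Ioo_div_ofReal {g : ℝ → ℝ≥0∞}
    (hg : AEMeasurable g (volume.restrict (Ioo 0 1))) :
    AEMeasurable (fun x ↦ ∫⁻ t in Ioo x 1, g t / ENNReal.ofReal t)
      (volume.restrict (Ioo 0 1)) := by
  have hK : AEMeasurable (fun z : ℝ × ℝ ↦ hardyKernel z.2 z.1 * g z.2)
      ((volume.restrict (Ioo 0 1)).prod (volume.restrict (Ioo 0 1))) :=
    (measurable_hardyKernel.comp measurable_swap).aemeasurable.mul hg.comp_snd
  refine hK.lintegral_prod_right'.congr ?_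
  filter_upwards [ae_restrict_mem measurableSet_Ioo] with x hx
  exact (setLIntegral_div_ofReal_eq_setLIntegral_hardyKernel_mul hx.1.le g).symm

theorem setLIntegral_le_setLIntegral_copson {g : ℝ → ℝ≥0∞} (hg : Measurable g) {x : ℝ}
    (hx : x ≤ 1) :
    ∫⁻ t in Ioo 0 x, g t ≤ ∫⁻ t in Ioo 0 x, ∫⁻ s in Ioo t 1, g s / ENNReal.ofReal s :=
  calc ∫⁻ t in Ioo 0 x, g t
      = ∫⁻ t in Ioo 0 x, g t / ENNReal.ofReal t * ∫⁻ _ in Ioo 0 t, 1 :=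
        setLIntegral_congr_fun measurableSet_Ioo fun t ht ↦ by
          rw [setLIntegral_one, Real.volume_Ioo, sub_zero,
            ENNReal.div_mul_cancel (ofReal_pos.2 ht.1).ne' ofReal_ne_top]
    _ = ∫⁻ t in Ioo 0 x, 1 * ∫⁻ s in Ioo t x, g s / ENNReal.ofReal s :=
        (setLIntegral_Ioo_mul_setLIntegral_Ioo_comm measurable_const
          (hg.div ENNReal.measurable_ofReal)).symm
    _ ≤ ∫⁻ t in Ioo 0 x, ∫⁻ s in Ioo t 1, g s / ENNReal.ofReal s :=
        lintegral_mono fun t ↦ by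
          rw [one_mul]
          exact lintegral_mono_set (Ioo_subset_Ioo_right hx)

theorem copson_le_lintegral_add_setLIntegral_hardy_div {g : ℝ → ℝ≥0∞} (hg : Measurable g)
    {x : ℝ} (hx : x ∈ Ioo 0 1) :
    ∫⁻ s in Ioo x 1, g s / ENNReal.ofReal s ≤
      (∫⁻ s in Ioo 0 1, g s) +
        ∫⁻ t in Ioo x 1, (∫⁻ s in Ioo 0 t, g s) / ENNReal.ofReal t / ENNReal.ofReal t := by
  have hw : Measurable fun t : ℝ ↦ ENNReal.ofReal t ^ (-2 : ℝ) :=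
    ENNReal.measurable_ofReal.pow_const _
  have hsplit : ∀ s ∈ Ioo x 1,
      g s / ENNReal.ofReal s = g s * (∫⁻ t in Ioo s 1, ENNReal.ofReal t ^ (-2 : ℝ)) + g s := by
    intro s hs
    have hs0 : 0 < s := hx.1.trans hs.1
    have hinv : (1 : ℝ) ≤ s⁻¹ := one_le_inv₀ hs0 |>.2 hs.2.le
    rw [setLIntegral_Ioo_ofReal_rpow hs0.le hs.2.le (Or.inr ⟨by norm_num, hs0⟩),
      show ((1 : ℝ) ^ ((-2 : ℝ) + 1) - s ^ ((-2 : ℝ) + 1)) / ((-2 : ℝ) + 1) = s⁻¹ - 1 by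
        norm_num [Real.rpow_neg_one, div_neg],
      ← mul_add_one, ← ofReal_one, ← ofReal_add (by linarith) zero_le_one, sub_add_cancel,
      ofReal_inv_of_pos hs0, div_eq_mul_inv]
  calc ∫⁻ s in Ioo x 1, g s / ENNReal.ofReal s
      = (∫⁻ s in Ioo x 1, g s * ∫⁻ t in Ioo s 1, ENNReal.ofReal t ^ (-2 : ℝ)) +
          ∫⁻ s in Ioo x 1, g s := by
        rw [setLIntegral_congr_fun measurableSet_Ioo hsplit, lintegral_add_right _ hg]
    _ = (∫⁻ t in Ioo x 1, ENNReal.ofReal t ^ (-2 : ℝ) * ∫⁻ s in Ioo x t, g s) +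
          ∫⁻ s in Ioo x 1, g s := by
        rw [setLIntegral_Ioo_mul_setLIntegral_Ioo_comm hg hw]
    _ ≤ (∫⁻ t in Ioo x 1, (∫⁻ s in Ioo 0 t, g s) / ENNReal.ofReal t / ENNReal.ofReal t) +
          ∫⁻ s in Ioo 0 1, g s := by
        gcongr ?_ + ?_
        · refine lintegral_mono fun t ↦ ?_
          calc ENNReal.ofReal t ^ (-2 : ℝ) * ∫⁻ s in Ioo x t, g s
              ≤ ENNReal.ofReal t ^ (-2 : ℝ) * ∫⁻ s in Ioo 0 t, g s := by
                gcongr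
                exact hx.1.le
            _ = (∫⁻ s in Ioo 0 t, g s) / ENNReal.ofReal t / ENNReal.ofReal t := by
                rw [rpow_neg, ← inv_rpow, rpow_two, sq, div_eq_mul_inv, div_eq_mul_inv]
                ring
        · exact lintegral_mono_set (Ioo_subset_Ioo_left hx.1.le)
    _ = _ := add_comm _ _

section

variable {p q : ℝ}

theorem lintegral_hardy_rpow_le (hpq : p.HolderConjugate q) {g : ℝ → ℝ≥0∞}
    (hg : AEMeasurable g (volume.restrict (Ioo 0 1))) :
    ∫⁻ x in Ioo 0 1, ((∫⁻ t in Ioo 0 x, g t) / ENNReal.ofReal x) ^ p ≤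
      ENNReal.ofReal q ^ p * ∫⁻ t in Ioo 0 1, g t ^ p := by
  have hφ := ENNReal.measurable_ofReal.pow_const (-(p⁻¹ * q⁻¹))
  calc ∫⁻ x in Ioo 0 1, ((∫⁻ t in Ioo 0 x, g t) / ENNReal.ofReal x) ^ p
      = ∫⁻ x in Ioo 0 1, (∫⁻ t in Ioo 0 1, hardyKernel x t * g t) ^ p :=
        setLIntegral_congr_fun measurableSet_Ioo fun x hx ↦ by
          rw [div_ofReal_eq_setLIntegral_hardyKernel_mul hx]
    _ ≤ ENNReal.ofReal q ^ (p - 1) * ENNReal.ofReal q * ∫⁻ t in Ioo 0 1, g t ^ p := by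
        refine lintegral_rpow_lintegral_mul_le_of_schur hpq measurable_hardyKernel hφ hφ
          (ae_restrict_Ioo_ofReal_rpow_ne_zero_ne_top _) ?_ ?_ hg
        · filter_upwards [ae_restrict_mem measurableSet_Ioo] with x hx
          simp only [rpow_neg_inv_mul_inv_rpow hpq]
          rw [setLIntegral_hardyKernel_mul_rpow (inv_lt_one_of_one_lt₀ hpq.lt) hx,
            hpq.one_sub_inv, inv_inv]
        · filter_upwards [ae_restrict_mem measurableSet_Ioo] with t ht
          simp only [rpow_neg_inv_mul_inv_rpow' hpq]
          simpa only [inv_inv] using setLIntegral_hardyKernel_swap_mul_rpow_le hpq.symm.inv_pos ht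
    _ = ENNReal.ofReal q ^ p * ∫⁻ t in Ioo 0 1, g t ^ p := by
        rw [ENNReal.rpow_sub_one_mul_self _ hpq.lt.le]

theorem lintegral_copson_rpow_le (hpq : p.HolderConjugate q) {g : ℝ → ℝ≥0∞}
    (hg : AEMeasurable g (volume.restrict (Ioo 0 1))) :
    ∫⁻ x in Ioo 0 1, (∫⁻ t in Ioo x 1, g t / ENNReal.ofReal t) ^ p ≤
      ENNReal.ofReal p ^ p * ∫⁻ t in Ioo 0 1, g t ^ p := by
  have hφ := ENNReal.measurable_ofReal.pow_const (-(p⁻¹ * q⁻¹))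
  have hK : Measurable (Function.uncurry fun x t ↦ hardyKernel t x) :=
    measurable_hardyKernel.comp measurable_swap
  calc ∫⁻ x in Ioo 0 1, (∫⁻ t in Ioo x 1, g t / ENNReal.ofReal t) ^ p
      = ∫⁻ x in Ioo 0 1, (∫⁻ t in Ioo 0 1, hardyKernel t x * g t) ^ p :=
        setLIntegral_congr_fun measurableSet_Ioo fun x hx ↦ by
          rw [setLIntegral_div_ofReal_eq_setLIntegral_hardyKernel_mul hx.1.le]
    _ ≤ ENNReal.ofReal p ^ (p - 1) * ENNReal.ofReal p * ∫⁻ t in Ioo 0 1, g t ^ p := by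
        refine lintegral_rpow_lintegral_mul_le_of_schur hpq hK hφ hφ
          (ae_restrict_Ioo_ofReal_rpow_ne_zero_ne_top _) ?_ ?_ hg
        · filter_upwards [ae_restrict_mem measurableSet_Ioo] with x hx
          simp only [rpow_neg_inv_mul_inv_rpow hpq]
          simpa only [inv_inv] using setLIntegral_hardyKernel_swap_mul_rpow_le hpq.inv_pos hx
        · filter_upwards [ae_restrict_mem measurableSet_Ioo] with t ht
          simp only [rpow_neg_inv_mul_inv_rpow' hpq]
          rw [setLIntegral_hardyKernel_mul_rpow (inv_lt_one_of_one_lt₀ hpq.symm.lt) ht,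
            hpq.symm.one_sub_inv, inv_inv]
    _ = ENNReal.ofReal p ^ p * ∫⁻ t in Ioo 0 1, g t ^ p := by
        rw [ENNReal.rpow_sub_one_mul_self _ hpq.lt.le]

theorem lintegral_hardy_rpow_le_lintegral_copson_rpow (hpq : p.HolderConjugate q)
    {g : ℝ → ℝ≥0∞} (hg : Measurable g) :
    ∫⁻ x in Ioo 0 1, ((∫⁻ t in Ioo 0 x, g t) / ENNReal.ofReal x) ^ p ≤
      ENNReal.ofReal q ^ p * ∫⁻ x in Ioo 0 1, (∫⁻ t in Ioo x 1, g t / ENNReal.ofReal t) ^ p :=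
  calc ∫⁻ x in Ioo 0 1, ((∫⁻ t in Ioo 0 x, g t) / ENNReal.ofReal x) ^ p
      ≤ ∫⁻ x in Ioo 0 1,
          ((∫⁻ t in Ioo 0 x, ∫⁻ s in Ioo t 1, g s / ENNReal.ofReal s) / ENNReal.ofReal x) ^ p :=
        setLIntegral_mono' measurableSet_Ioo fun _ hx ↦ rpow_le_rpow
          (ENNReal.div_le_div_right (setLIntegral_le_setLIntegral_copson hg hx.2.le) _) hpq.pos.le
    _ ≤ _ := lintegral_hardy_rpow_le hpq (aemeasurable_setLIntegral_Ioo_div_ofReal hg.aemeasurable)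

theorem lintegral_copson_rpow_le_lintegral_hardy_rpow (hpq : p.HolderConjugate q)
    {g : ℝ → ℝ≥0∞} (hg : Measurable g) :
    ∫⁻ x in Ioo 0 1, (∫⁻ t in Ioo x 1, g t / ENNReal.ofReal t) ^ p ≤
      2 ^ (p - 1) * ((∫⁻ t in Ioo 0 1, g t) ^ p +
        ENNReal.ofReal p ^ p * ∫⁻ x in Ioo 0 1, ((∫⁻ t in Ioo 0 x, g t) / ENNReal.ofReal x) ^ p) :=
  calc ∫⁻ x in Ioo 0 1, (∫⁻ t in Ioo x 1, g t / ENNReal.ofReal t) ^ p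
      ≤ ∫⁻ x in Ioo 0 1, 2 ^ (p - 1) * ((∫⁻ t in Ioo 0 1, g t) ^ p +
          (∫⁻ t in Ioo x 1, (∫⁻ s in Ioo 0 t, g s) / ENNReal.ofReal t / ENNReal.ofReal t) ^ p) :=
        setLIntegral_mono' measurableSet_Ioo fun x hx ↦
          (rpow_le_rpow (copson_le_lintegral_add_setLIntegral_hardy_div hg hx) hpq.pos.le).trans
            (rpow_add_le_mul_rpow_add_rpow _ _ hpq.lt.le)
    _ = 2 ^ (p - 1) * ((∫⁻ t in Ioo 0 1, g t) ^ p + ∫⁻ x in Ioo 0 1,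
          (∫⁻ t in Ioo x 1, (∫⁻ s in Ioo 0 t, g s) / ENNReal.ofReal t / ENNReal.ofReal t) ^ p) := by
        rw [lintegral_const_mul' _ _ (by finiteness), lintegral_add_left measurable_const,
          setLIntegral_const, Real.volume_Ioo, sub_zero, ofReal_one, mul_one]
    _ ≤ _ := by
        gcongr
        exact lintegral_copson_rpow_le hpq
          (aemeasurable_setLIntegral_Ioo_zero_div_ofReal hg.aemeasurable)

end

/-- For `1 < p < ∞` and measurable `f : (0,1) → ℝ`: `C*|f| ∈ L^p(0,1)` iff
`C|f| ∈ L^p(0,1)` and `f ∈ L^1(0,1)`, i.e. `C*(L^p)[0,1] = C(L^p)[0,1] ∩ L^1[0,1]`. -/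
theorem stmt3 (p : ℝ) (hp : 1 < p) (f : ℝ → ℝ) (hf : Measurable f) :
    (∫⁻ x in Set.Ioo (0:ℝ) 1, copsonAbs f x ^ p) < ⊤ ↔
      ((∫⁻ x in Set.Ioo (0:ℝ) 1, cesaroAbs f x ^ p) < ⊤ ∧
        (∫⁻ t in Set.Ioo (0:ℝ) 1, ENNReal.ofReal |f t|) < ⊤) := by
  have hpq := Real.HolderConjugate.conjExponent hp
  have hg : Measurable fun t ↦ ENNReal.ofReal |f t| := ENNReal.measurable_ofReal.comp hf.abs
  constructor
  · intro hcopson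
    exact ⟨(lintegral_hardy_rpow_le_lintegral_copson_rpow hpq hg).trans_lt
        (mul_lt_top (by finiteness) hcopson),
      (setLIntegral_le_setLIntegral_copson hg le_rfl).trans_lt
        (lintegral_lt_top_of_lintegral_rpow_lt_top hp.le hcopson)⟩
  · rintro ⟨hcesaro, hL1⟩
    exact (lintegral_copson_rpow_le_lintegral_hardy_rpow hpq hg).trans_lt
      (mul_lt_top (by finiteness) (add_lt_top.2
        ⟨rpow_lt_top_of_nonneg hpq.pos.le hL1.ne, mul_lt_top (by finiteness) hcesaro⟩))
end

section
/- Let f(x) = (1−x)^{−2} for x ∈ (0,1). Then Cf(x) = 1/(1−x) for every x ∈ (0,1), and for every p with 1 ≤ p < ∞ one has Cf ∉ L^p(0,1) while C(Cf) ∈ L^p(0,1). In particular, for every 1 ≤ p < ∞ the function f belongs to the iterated Cesàro space CC(L^p)[0,1] but not to C(L^p)[0,1]. -/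
/-!
Both Cesàro means are explicit by the fundamental theorem of calculus:
`Cf(x) = 1/(1-x)` and `C(Cf)(x) = -log(1-x)/x`. Hence `(Cf)^p = (1-x)^{-p}` is not integrable
near `1` when `p ≥ 1`. The logarithmic singularity of `C(Cf)` is milder than any power:
`log z ≤ z - 1` at `z = (1-x)^{-ε}` gives `-log(1-x)/x ≤ (1-x)^{-ε}/ε` for `0 < ε ≤ 1`, so
`(C(Cf))^p ≤ ε^{-p} (1-x)^{-εp}`, which is integrable as soon as `εp < 1`.
-/

open MeasureTheory Set

/-- The Cesàro operator `Cf(x) = (1/x)∫_0^x f(t) dt`, with values in `[0,∞]`. -/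
noncomputable def ces (f : ℝ → ENNReal) (x : ℝ) : ENNReal :=
  (∫⁻ t in Set.Ioo 0 x, f t) / ENNReal.ofReal x

/-- The function `f(x) = (1−x)^{−2}` on `(0,1)`. -/
noncomputable def f4 : ℝ → ENNReal := fun x => ENNReal.ofReal (1 / (1 - x) ^ 2)

theorem setLIntegral_Ioo_ofReal_eq_sub {F F' : ℝ → ℝ} {a b : ℝ} (hab : a ≤ b)
    (hderiv : ∀ t ∈ Icc a b, HasDerivAt F (F' t) t) (hcont : ContinuousOn F' (Icc a b))
    (hnonneg : ∀ t ∈ Ioo a b, 0 ≤ F' t) :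
    ∫⁻ t in Ioo a b, ENNReal.ofReal (F' t) = ENNReal.ofReal (F b - F a) := by
  have hint : IntegrableOn F' (Icc a b) := hcont.integrableOn_Icc
  rw [← ofReal_integral_eq_lintegral_ofReal (hint.mono_set Ioo_subset_Icc_self)
      ((ae_restrict_iff' measurableSet_Ioo).2 (.of_forall hnonneg)),
    ← integral_Ioc_eq_integral_Ioo, ← intervalIntegral.integral_of_le hab,
    intervalIntegral.integral_eq_sub_of_hasDerivAt (by rwa [uIcc_of_le hab])
      ((intervalIntegrable_iff_integrableOn_Icc_of_le hab).2 hint)]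

theorem ces_f4_eq_of_mem_Ioo {x : ℝ} (hx : x ∈ Ioo (0:ℝ) 1) :
    ces f4 x = ENNReal.ofReal (1 / (1 - x)) := by
  obtain ⟨hx0, hx1⟩ := hx
  have hpos : ∀ t ∈ Icc 0 x, 0 < 1 - t := fun t ht => by linarith [ht.2]
  have hprim : ∫⁻ t in Ioo 0 x, f4 t = ENNReal.ofReal ((1 - x)⁻¹ - (1 - 0)⁻¹) :=
    setLIntegral_Ioo_ofReal_eq_sub (F := fun t => (1 - t)⁻¹) (F' := fun t => 1 / (1 - t) ^ 2)
      hx0.le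
      (fun t ht => (((hasDerivAt_id t).const_sub 1).inv (hpos t ht).ne').congr_deriv (by simp))
      (continuousOn_const.div (by fun_prop) fun t ht => (pow_pos (hpos t ht) 2).ne')
      (fun t _ => by positivity)
  rw [ces, hprim, ← ENNReal.ofReal_div_of_pos hx0]
  congr 1
  field_simp [(hpos x ⟨hx0.le, le_rfl⟩).ne']
  ring

theorem ces_ces_f4_eq_of_mem_Ioo {x : ℝ} (hx : x ∈ Ioo (0:ℝ) 1) :
    ces (ces f4) x = ENNReal.ofReal (-Real.log (1 - x) / x) := by
  obtain ⟨hx0, hx1⟩ := hx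
  have hpos : ∀ t ∈ Icc 0 x, 0 < 1 - t := fun t ht => by linarith [ht.2]
  have hprim :
      ∫⁻ t in Ioo 0 x, ces f4 t = ENNReal.ofReal (-Real.log (1 - x) - -Real.log (1 - 0)) := by
    rw [setLIntegral_congr_fun measurableSet_Ioo
      fun t ht => ces_f4_eq_of_mem_Ioo ⟨ht.1, ht.2.trans hx1⟩]
    exact setLIntegral_Ioo_ofReal_eq_sub (F := fun t => -Real.log (1 - t))
      (F' := fun t => 1 / (1 - t)) hx0.le
      (fun t ht => (((hasDerivAt_id t).const_sub 1).log (hpos t ht).ne').neg.congr_deriv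
        (by simp [neg_div]))
      (continuousOn_const.div (by fun_prop) fun t ht => (hpos t ht).ne')
      (fun t ht => (one_div_pos.2 (hpos t (Ioo_subset_Icc_self ht))).le)
  rw [ces, hprim, ← ENNReal.ofReal_div_of_pos hx0]
  simp

theorem integrableOn_Ioo_one_sub_rpow_iff {s : ℝ} :
    IntegrableOn (fun x : ℝ => (1 - x) ^ s) (Ioo 0 1) ↔ -1 < s := by
  rw [← intervalIntegral.integrableOn_Ioo_rpow_iff zero_lt_one,
    ← intervalIntegrable_iff_integrableOn_Ioo_of_le zero_le_one,
    ← intervalIntegrable_iff_integrableOn_Ioo_of_le zero_le_one,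
    ← IntervalIntegrable.comp_sub_left_iff (f := fun x : ℝ => x ^ s) 1]
  simp [IntervalIntegrable.symm_iff]

theorem neg_log_one_sub_div_le_rpow {x ε : ℝ} (hx : x ∈ Ioo (0:ℝ) 1) (hε0 : 0 < ε)
    (hε1 : ε ≤ 1) :
    -Real.log (1 - x) / x ≤ (1 - x) ^ (-ε) / ε := by
  obtain ⟨hx0, hx1⟩ := hx
  have hy0 : 0 < 1 - x := by linarith
  have hlog : -Real.log (1 - x) * ε ≤ (1 - x) ^ (-ε) - 1 := by
    have := Real.log_le_sub_one_of_pos (Real.rpow_pos_of_pos hy0 (-ε))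
    rw [Real.log_rpow hy0] at this
    linarith
  have hself : 1 - x ≤ (1 - x) ^ ε := Real.self_le_rpow_of_le_one hy0.le (by linarith) hε1
  have hinv : (1 - x) ^ (-ε) * (1 - x) ^ ε = 1 := by
    rw [← Real.rpow_add hy0, neg_add_cancel, Real.rpow_zero]
  rw [div_le_div_iff₀ hx0 hε0]
  nlinarith [Real.rpow_pos_of_pos hy0 (-ε)]

theorem setLIntegral_ces_f4_rpow_eq_top {p : ℝ} (hp : 1 ≤ p) :
    ∫⁻ x in Ioo (0:ℝ) 1, ces f4 x ^ p = ⊤ := by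
  have hpow : ∀ x ∈ Ioo (0:ℝ) 1, ces f4 x ^ p = ENNReal.ofReal ((1 - x) ^ (-p)) := by
    intro x hx
    have hy0 : 0 < 1 - x := by linarith [hx.2]
    rw [ces_f4_eq_of_mem_Ioo hx, ENNReal.ofReal_rpow_of_nonneg (by positivity) (by linarith),
      one_div, Real.inv_rpow hy0.le, Real.rpow_neg hy0.le]
  rw [setLIntegral_congr_fun measurableSet_Ioo hpow]
  by_contra hfin
  have hnonneg : 0 ≤ᵐ[volume.restrict (Ioo (0:ℝ) 1)] fun x => (1 - x) ^ (-p) :=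
    (ae_restrict_iff' measurableSet_Ioo).2
      (.of_forall fun x hx => Real.rpow_nonneg (by linarith [hx.2]) _)
  have hint := (lintegral_ofReal_ne_top_iff_integrable
    (by fun_prop : Measurable fun x : ℝ => (1 - x) ^ (-p)).aestronglyMeasurable hnonneg).1 hfin
  linarith [integrableOn_Ioo_one_sub_rpow_iff.1 hint]

theorem setLIntegral_ces_ces_f4_rpow_lt_top {p : ℝ} (hp : 0 < p) :
    ∫⁻ x in Ioo (0:ℝ) 1, ces (ces f4) x ^ p < ⊤ := by
  set ε := min 1 (1 / (2 * p))
  have hε0 : 0 < ε := lt_min one_pos (by positivity)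
  have hεp : ε * p ≤ 1 / 2 := calc
    ε * p ≤ 1 / (2 * p) * p := mul_le_mul_of_nonneg_right (min_le_right _ _) hp.le
    _ = 1 / 2 := by field_simp
  have hint : IntegrableOn (fun x => (1 - x) ^ (-(ε * p)) / ε ^ p) (Ioo 0 1) :=
    (integrableOn_Ioo_one_sub_rpow_iff.2 (by linarith)).div_const _
  refine (setLIntegral_mono' measurableSet_Ioo fun x hx => ?_).trans_lt hint.lintegral_lt_top
  have hy0 : 0 < 1 - x := by linarith [hx.2]
  have hbase : 0 ≤ -Real.log (1 - x) / x :=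
    div_nonneg (neg_nonneg.2 (Real.log_nonpos hy0.le (by linarith [hx.1]))) hx.1.le
  rw [ces_ces_f4_eq_of_mem_Ioo hx, ENNReal.ofReal_rpow_of_nonneg hbase hp.le]
  refine ENNReal.ofReal_le_ofReal ?_
  calc (-Real.log (1 - x) / x) ^ p
      ≤ ((1 - x) ^ (-ε) / ε) ^ p :=
        Real.rpow_le_rpow hbase (neg_log_one_sub_div_le_rpow hx hε0 (min_le_left _ _)) hp.le
    _ = (1 - x) ^ (-(ε * p)) / ε ^ p := by
        rw [Real.div_rpow (by positivity) hε0.le, ← Real.rpow_mul hy0.le, neg_mul]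

/-- For `f(x) = (1−x)^{−2}` on `(0,1)`: `Cf(x) = 1/(1−x)` on `(0,1)`, and for every
`1 ≤ p < ∞`, `Cf ∉ L^p(0,1)` while `C(Cf) ∈ L^p(0,1)`; that is, `f ∈ CC(L^p)[0,1]`
but `f ∉ C(L^p)[0,1]`. -/
theorem stmt4 :
    (∀ x ∈ Set.Ioo (0:ℝ) 1, ces f4 x = ENNReal.ofReal (1 / (1 - x))) ∧
    ∀ p : ℝ, 1 ≤ p →
      ¬ ((∫⁻ x in Set.Ioo (0:ℝ) 1, ces f4 x ^ p) < ⊤) ∧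
      (∫⁻ x in Set.Ioo (0:ℝ) 1, ces (ces f4) x ^ p) < ⊤ := by
  refine ⟨fun x hx => ces_f4_eq_of_mem_Ioo hx, fun p hp => ⟨fun hfin => ?_, ?_⟩⟩
  · exact hfin.ne (setLIntegral_ces_f4_rpow_eq_top hp)
  · exact setLIntegral_ces_ces_f4_rpow_lt_top (by linarith)
end

section
/- Let φ : [0,∞) × [0,∞) → [0,∞) be concave, continuous, positively homogeneous, and not identically zero on (0,∞)². Let f₀, f₁ : (0,∞) → ℝ be measurable. Then for every x > 0, the decreasing rearrangement (with respect to Lebesgue measure on (0,∞)) satisfies (φ(|f₀|, |f₁|))^*(x) ≤ φ(f₀^*(x/2), f₁^*(x/2)), where a value of +∞ of a rearrangement is allowed on the right-hand side (with φ extended to [0,∞]² by increasing limits). -/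
open MeasureTheory Set

/-- The decreasing rearrangement (w.r.t. Lebesgue measure on `(0,∞)`):
`f^*(t) = inf{λ > 0 : m({x ∈ (0,∞) : |f(x)| > λ}) ≤ t}`, with values in `[0,∞]`. -/
noncomputable def rearr (f : ℝ → ℝ) (t : ℝ) : ENNReal :=
  sInf {l : ENNReal |
    MeasureTheory.volume {x ∈ Set.Ioi (0:ℝ) | l < ENNReal.ofReal |f x|} ≤ ENNReal.ofReal t}

/-- The extension of `φ` to `[0,∞]²` by increasing limits. -/
noncomputable def ephi (φ : ℝ → ℝ → ℝ) (s t : ENNReal) : ENNReal :=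
  ⨆ (a : NNReal) (b : NNReal) (_ : (a : ENNReal) ≤ s) (_ : (b : ENNReal) ≤ t),
    ENNReal.ofReal (φ a b)

/-!
Wherever `φ(|f₀|, |f₁|)` exceeds `φ(f₀^*(x/2), f₁^*(x/2))`, one of the `|fᵢ|` exceeds
`fᵢ^*(x/2)`, and each of these two level sets has measure at most `x/2` because the infimum
defining a rearrangement is attained.
-/

open scoped ENNReal

/-- The infimum defining a decreasing rearrangement is attained, since the distribution function
is right-continuous. -/
theorem measure_sInf_lt_le {α : Type*} [MeasurableSpace α] (μ : Measure α) (g : α → ℝ≥0∞)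
    (c : ℝ≥0∞) : μ {x | sInf {l | μ {x | l < g x} ≤ c} < g x} ≤ c := by
  set S := {l | μ {x | l < g x} ≤ c}
  have hS : S.Nonempty := ⟨⊤, by simp [S]⟩
  obtain ⟨u, hu_anti, -, hu_lim, hu_mem⟩ := (isGLB_sInf S).exists_seq_antitone_tendsto hS
  have hunion : {x | sInf S < g x} = ⋃ n, {x | u n < g x} := by
    ext x
    simp only [mem_ofPred_eq, mem_iUnion]
    refine ⟨fun hx ↦ (hu_lim.eventually (gt_mem_nhds hx)).exists, fun ⟨n, hn⟩ ↦ ?_⟩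
    exact (sInf_le (hu_mem n)).trans_lt hn
  have hmono : Monotone fun n ↦ {x | u n < g x} :=
    fun m n hmn x hx ↦ (hu_anti hmn).trans_lt hx
  rw [hunion, hmono.measure_iUnion]
  exact iSup_le hu_mem

theorem volume_rearr_lt_le (f : ℝ → ℝ) (t : ℝ) :
    volume {x ∈ Ioi (0:ℝ) | rearr f t < ENNReal.ofReal |f x|} ≤ ENNReal.ofReal t := by
  have hrestrict : ∀ l : ℝ≥0∞, volume {x ∈ Ioi (0:ℝ) | l < ENNReal.ofReal |f x|}
      = volume.restrict (Ioi 0) {x | l < ENNReal.ofReal |f x|} := fun l ↦ by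
    rw [Measure.restrict_apply' measurableSet_Ioi, inter_comm]
    rfl
  simp only [rearr, hrestrict]
  exact measure_sInf_lt_le _ _ _

theorem ofReal_le_ephi (φ : ℝ → ℝ → ℝ) {a b : ℝ} (ha : 0 ≤ a) (hb : 0 ≤ b) {s t : ℝ≥0∞}
    (has : ENNReal.ofReal a ≤ s) (hbt : ENNReal.ofReal b ≤ t) :
    ENNReal.ofReal (φ a b) ≤ ephi φ s t :=
  le_iSup₂_of_le a.toNNReal b.toNNReal <| le_iSup₂_of_le has hbt <| by
    rw [Real.coe_toNNReal _ ha, Real.coe_toNNReal _ hb]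

theorem lt_ofReal_abs_or_lt_of_ephi_lt (φ : ℝ → ℝ → ℝ)
    (hnn : ∀ s t : ℝ, 0 ≤ s → 0 ≤ t → 0 ≤ φ s t) {a b : ℝ} {s t : ℝ≥0∞}
    (h : ephi φ s t < ENNReal.ofReal |(φ |a| |b|)|) :
    s < ENNReal.ofReal |a| ∨ t < ENNReal.ofReal |b| := by
  by_contra! hle
  rw [abs_of_nonneg (hnn _ _ (abs_nonneg a) (abs_nonneg b))] at h
  exact h.not_ge (ofReal_le_ephi φ (abs_nonneg a) (abs_nonneg b) hle.1 hle.2)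

theorem stmt8_general (φ : ℝ → ℝ → ℝ)
    (hnn : ∀ s t : ℝ, 0 ≤ s → 0 ≤ t → 0 ≤ φ s t)
    (f₀ f₁ : ℝ → ℝ)
    (x : ℝ) (hx : 0 < x) :
    rearr (fun y => φ |f₀ y| |f₁ y|) x ≤ ephi φ (rearr f₀ (x / 2)) (rearr f₁ (x / 2)) := by
  set r₀ := rearr f₀ (x / 2)
  set r₁ := rearr f₁ (x / 2)
  refine sInf_le (show _ ≤ ENNReal.ofReal x from ?_)
  calc volume {y ∈ Ioi 0 | ephi φ r₀ r₁ < ENNReal.ofReal |(φ |f₀ y| |f₁ y|)|}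
      ≤ volume ({y ∈ Ioi 0 | r₀ < ENNReal.ofReal |f₀ y|}
          ∪ {y ∈ Ioi 0 | r₁ < ENNReal.ofReal |f₁ y|}) :=
        measure_mono fun y ⟨hy0, hy⟩ ↦
          (lt_ofReal_abs_or_lt_of_ephi_lt φ hnn hy).imp (⟨hy0, ·⟩) (⟨hy0, ·⟩)
    _ ≤ volume {y ∈ Ioi 0 | r₀ < ENNReal.ofReal |f₀ y|}
          + volume {y ∈ Ioi 0 | r₁ < ENNReal.ofReal |f₁ y|} := measure_union_le _ _
    _ ≤ ENNReal.ofReal (x / 2) + ENNReal.ofReal (x / 2) :=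
        add_le_add (volume_rearr_lt_le f₀ _) (volume_rearr_lt_le f₁ _)
    _ = ENNReal.ofReal x := by
        rw [← ENNReal.ofReal_add (by positivity) (by positivity), add_halves]

/-- If `φ : [0,∞)² → [0,∞)` is concave, continuous, positively homogeneous and not
identically zero on `(0,∞)²`, and `f₀, f₁ : (0,∞) → ℝ` are measurable, then for every
`x > 0`: `(φ(|f₀|, |f₁|))^*(x) ≤ φ(f₀^*(x/2), f₁^*(x/2))`, the right-hand side understood
via the extension of `φ` to `[0,∞]²` by increasing limits. -/
theorem stmt8 (φ : ℝ → ℝ → ℝ)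
    (hconc : ConcaveOn ℝ (Set.Ici 0 ×ˢ Set.Ici 0) (fun q : ℝ × ℝ => φ q.1 q.2))
    (hcont : ContinuousOn (fun q : ℝ × ℝ => φ q.1 q.2) (Set.Ici 0 ×ˢ Set.Ici 0))
    (hhom : ∀ l s t : ℝ, 0 ≤ l → 0 ≤ s → 0 ≤ t → φ (l * s) (l * t) = l * φ s t)
    (hnn : ∀ s t : ℝ, 0 ≤ s → 0 ≤ t → 0 ≤ φ s t)
    (hnz : ∃ s t : ℝ, 0 < s ∧ 0 < t ∧ 0 < φ s t)
    (f₀ f₁ : ℝ → ℝ) (hm0 : Measurable f₀) (hm1 : Measurable f₁)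
    (x : ℝ) (hx : 0 < x) :
    rearr (fun y => φ |f₀ y| |f₁ y|) x ≤ ephi φ (rearr f₀ (x / 2)) (rearr f₁ (x / 2)) :=
  stmt8_general φ hnn f₀ f₁ x hx
end

section
/- Let φ : [0,∞) × [0,∞) → [0,∞) be concave, continuous, positively homogeneous, and not identically zero on (0,∞)². Let f₀, f₁ : (0,∞) → [0,∞) be measurable and let x > 0 be such that C(C*f₀)(x) < ∞ and C(C*f₁)(x) < ∞. Then C(C*[φ(f₀, f₁)])(x) ≤ φ(C(C*f₀)(x), C(C*f₁)(x)). -/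
/-!
For `ε > 0` and a point `(a, b)` of the quadrant, `φ` has a linear majorant `αs + βt` with
`α, β ≥ 0` exceeding `φ (a, b)` by at most `ε` there. By homogeneity it suffices to find an affine
majorant of the concave slice `u ↦ φ (1, u)` that is `ε`-close at `b / a`: a secant through
`b / a` and a nearby point works, the gap in between being covered by continuity. Since `C ∘ C*` is
monotone and linear on nonnegative measurable functions, applying it to
`φ (f₀, f₁) ≤ α f₀ + β f₁` with `(a, b) = (C C* f₀ (x), C C* f₁ (x))` gives the bound up to `ε`.
-/

open MeasureTheory Set

/-- The Copson operator `C*f(x) = ∫_x^∞ f(t)/t dt`, with values in `[0,∞]`. -/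
noncomputable def cop (f : ℝ → ENNReal) (x : ℝ) : ENNReal :=
  ∫⁻ t in Set.Ioi x, f t / ENNReal.ofReal t

open Filter Topology
open scoped ENNReal

namespace ConcaveOn

theorem le_add_slope_mul_sub {s : Set ℝ} {g : ℝ → ℝ} (hg : ConcaveOn ℝ s g) {a b u : ℝ}
    (ha : a ∈ s) (hb : b ∈ s) (hu : u ∈ s) (hab : a < b) (hub : u ∉ Ioo a b) :
    g u ≤ g a + slope g a b * (u - a) := by
  rcases eq_or_ne u a with rfl | hua
  · simp
  have hslope : (slope g a u - slope g a b) * (u - a) ≤ 0 := by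
    rcases lt_or_gt_of_ne hua with hlt | hgt
    · refine mul_nonpos_of_nonneg_of_nonpos (sub_nonneg.2 ?_) (by linarith)
      exact hg.slope_anti ha ⟨hu, hua⟩ ⟨hb, hab.ne'⟩ (by linarith)
    · have hbu : b ≤ u := by by_contra h; exact hub ⟨hgt, not_le.1 h⟩
      refine mul_nonpos_of_nonpos_of_nonneg (sub_nonpos.2 ?_) (by linarith)
      exact hg.slope_anti ha ⟨hb, hab.ne'⟩ ⟨hu, hua⟩ hbu
  have hgu : g u = g a + slope g a u * (u - a) := by
    rw [slope_def_field]; field_simp [sub_ne_zero.2 hua]; ring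
  linarith

theorem monotoneOn_Ici_of_forall_le {g : ℝ → ℝ} {a M : ℝ} (hg : ConcaveOn ℝ (Ici a) g)
    (hM : ∀ u ∈ Ici a, M ≤ g u) : MonotoneOn g (Ici a) := by
  intro x hx y hy hxy
  by_contra! hlt
  have hxy' : x < y := lt_of_le_of_ne hxy (by rintro rfl; exact lt_irrefl _ hlt)
  have hm : slope g x y < 0 := by
    rw [slope_def_field]; exact div_neg_of_neg_of_pos (by linarith) (by linarith)
  set m := slope g x y
  -- far enough to the right, the secant through `x` and `y` drops below `M`
  set z := y + (g x - M) / -m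
  have hyz : y ≤ z := le_add_of_nonneg_right (div_nonneg (by linarith [hM x hx]) (by linarith))
  have hz : z ∈ Ici a := le_trans hy hyz
  have hsecant := hg.le_add_slope_mul_sub hx hy hz hxy' (fun h => not_le.2 h.2 hyz)
  have hline : g x + m * (z - x) = M + m * (y - x) := by
    simp only [z]; field_simp [hm.ne]; ring
  linarith [hM z hz, mul_neg_of_neg_of_pos hm (sub_pos.2 hxy')]

theorem exists_affine_majorant_Ici {g : ℝ → ℝ} {a M u₀ ε : ℝ} (hg : ConcaveOn ℝ (Ici a) g)
    (hM : ∀ u ∈ Ici a, M ≤ g u) (hu₀ : u₀ ∈ Ici a) (hcont : ContinuousWithinAt g (Ici a) u₀)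
    (hε : 0 < ε) : ∃ c, ∀ u ∈ Ici a, g u ≤ g u₀ + ε + c * (u - u₀) := by
  obtain ⟨δ, hδ, hnear⟩ := Metric.continuousWithinAt_iff.1 hcont ε hε
  have hb : u₀ + δ ∈ Ici a := le_add_of_le_of_nonneg hu₀ hδ.le
  have hu₀b : u₀ < u₀ + δ := lt_add_of_pos_right u₀ hδ
  refine ⟨slope g u₀ (u₀ + δ), fun u hu => ?_⟩
  by_cases hmid : u ∈ Ioo u₀ (u₀ + δ)
  · have hslope : 0 ≤ slope g u₀ (u₀ + δ) := by
      rw [slope_def_field]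
      exact div_nonneg (sub_nonneg.2 (monotoneOn_Ici_of_forall_le hg hM hu₀ hb hu₀b.le))
        (by linarith)
    have hdist : dist u u₀ < δ := by
      rw [Real.dist_eq, abs_lt]; constructor <;> linarith [hmid.1, hmid.2]
    have hclose := (abs_lt.1 (Real.dist_eq _ _ ▸ hnear hu hdist)).2
    linarith [mul_nonneg hslope (sub_nonneg.2 hmid.1.le)]
  · linarith [hg.le_add_slope_mul_sub hu₀ hb hu hu₀b hmid]

end ConcaveOn

theorem exists_linear_majorant_of_pos (φ : ℝ → ℝ → ℝ)
    (hconc : ConcaveOn ℝ (Ici 0 ×ˢ Ici 0) (fun q : ℝ × ℝ => φ q.1 q.2))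
    (hcont : ContinuousOn (fun q : ℝ × ℝ => φ q.1 q.2) (Ici 0 ×ˢ Ici 0))
    (hhom : ∀ l s t : ℝ, 0 ≤ l → 0 ≤ s → 0 ≤ t → φ (l * s) (l * t) = l * φ s t)
    (hnn : ∀ s t : ℝ, 0 ≤ s → 0 ≤ t → 0 ≤ φ s t)
    {a b ε : ℝ} (ha : 0 < a) (hb : 0 ≤ b) (hε : 0 < ε) :
    ∃ α β : ℝ, (∀ s t, 0 ≤ s → 0 ≤ t → φ s t ≤ α * s + β * t) ∧ α * a + β * b = φ a b + ε := by
  have hdehom : ∀ s t, 0 < s → 0 ≤ t → φ s t = s * φ 1 (t / s) := fun s t hs ht => by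
    simpa [mul_div_cancel₀ t hs.ne'] using hhom s 1 (t / s) hs.le zero_le_one (by positivity)
  have hconc₁ : ConcaveOn ℝ (Ici 0) (φ 1) := by
    refine ⟨convex_Ici 0, fun u hu v hv p q hp hq hpq => ?_⟩
    simpa [hpq] using hconc.2 (x := (1, u)) ⟨mem_Ici.2 zero_le_one, hu⟩ (y := (1, v))
      ⟨mem_Ici.2 zero_le_one, hv⟩ hp hq hpq
  have hcont₁ : ContinuousOn (φ 1) (Ici 0) :=
    hcont.comp (f := fun u : ℝ => ((1 : ℝ), u)) (Continuous.continuousOn (by fun_prop))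
      fun u hu => ⟨mem_Ici.2 zero_le_one, hu⟩
  have hba : b / a ∈ Ici 0 := div_nonneg hb ha.le
  obtain ⟨c, hc⟩ := hconc₁.exists_affine_majorant_Ici (fun u hu => hnn 1 u zero_le_one hu) hba
    (hcont₁ _ hba) (div_pos hε ha)
  refine ⟨φ 1 (b / a) + ε / a - c * (b / a), c, ?_, ?_⟩
  · have hpos : ∀ q ∈ Ioi 0 ×ˢ Ici 0,
        φ q.1 q.2 ≤ (φ 1 (b / a) + ε / a - c * (b / a)) * q.1 + c * q.2 := by
      rintro ⟨s, t⟩ ⟨hs, ht⟩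
      rw [mem_Ioi] at hs
      calc φ s t = s * φ 1 (t / s) := hdehom s t hs ht
        _ ≤ s * (φ 1 (b / a) + ε / a + c * (t / s - b / a)) :=
          mul_le_mul_of_nonneg_left (hc (t / s) (div_nonneg ht hs.le)) hs.le
        _ = _ := by field_simp; ring
    -- the boundary `s = 0` follows by continuity
    intro s t hs ht
    have hclosure : closure (Ioi (0 : ℝ) ×ˢ Ici (0 : ℝ)) = Ici 0 ×ˢ Ici 0 := by
      rw [closure_prod_eq, closure_Ioi, closure_Ici]
    refine le_on_closure hpos (hclosure ▸ hcont) (Continuous.continuousOn (by fun_prop))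
      (x := (s, t)) (hclosure ▸ ⟨hs, ht⟩)
  · rw [hdehom a b ha hb]
    field_simp
    ring

theorem exists_linear_majorant (φ : ℝ → ℝ → ℝ)
    (hconc : ConcaveOn ℝ (Ici 0 ×ˢ Ici 0) (fun q : ℝ × ℝ => φ q.1 q.2))
    (hcont : ContinuousOn (fun q : ℝ × ℝ => φ q.1 q.2) (Ici 0 ×ˢ Ici 0))
    (hhom : ∀ l s t : ℝ, 0 ≤ l → 0 ≤ s → 0 ≤ t → φ (l * s) (l * t) = l * φ s t)
    (hnn : ∀ s t : ℝ, 0 ≤ s → 0 ≤ t → 0 ≤ φ s t)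
    {a b ε : ℝ} (ha : 0 ≤ a) (hb : 0 ≤ b) (hε : 0 < ε) :
    ∃ α β : ℝ, 0 ≤ α ∧ 0 ≤ β ∧ (∀ s t, 0 ≤ s → 0 ≤ t → φ s t ≤ α * s + β * t) ∧
      α * a + β * b ≤ φ a b + ε := by
  -- `a` may be `0`: perturb it to the right, using continuity of `φ · b`
  have hright : Tendsto (fun s => φ s b) (𝓝[>] a) (𝓝 (φ a b)) :=
    ((hcont.comp (f := fun s : ℝ => (s, b)) (Continuous.continuousOn (by fun_prop))
      fun s hs => ⟨hs, hb⟩) a ha).tendsto.mono_left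
      (nhdsWithin_mono a fun s hs => ha.trans (le_of_lt hs))
  obtain ⟨a', hφa', haa'⟩ := ((hright.eventually (gt_mem_nhds
    (lt_add_of_pos_right (φ a b) (half_pos hε)))).and self_mem_nhdsWithin).exists
  obtain ⟨α, β, hmaj, hval⟩ :=
    exists_linear_majorant_of_pos φ hconc hcont hhom hnn (ha.trans_lt haa') hb (half_pos hε)
  have hα : 0 ≤ α := by simpa using (hnn 1 0 zero_le_one le_rfl).trans (hmaj 1 0 zero_le_one le_rfl)
  have hβ : 0 ≤ β := by simpa using (hnn 0 1 le_rfl zero_le_one).trans (hmaj 0 1 le_rfl zero_le_one)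
  refine ⟨α, β, hα, hβ, hmaj, ?_⟩
  linarith [mul_le_mul_of_nonneg_left (le_of_lt (mem_Ioi.1 haa')) hα]

theorem ces_mono {f g : ℝ → ℝ≥0∞} (h : f ≤ g) : ces f ≤ ces g := fun _ =>
  ENNReal.div_le_div_right (lintegral_mono fun t => h t) _

theorem cop_mono {f g : ℝ → ℝ≥0∞} (h : f ≤ g) : cop f ≤ cop g := fun _ =>
  lintegral_mono fun t => ENNReal.div_le_div_right (h t) _

theorem cop_antitone (f : ℝ → ℝ≥0∞) : Antitone (cop f) := fun _ _ h =>
  lintegral_mono_set (Ioi_subset_Ioi h)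

theorem ces_add_mul {f g : ℝ → ℝ≥0∞} (hf : Measurable f) (hg : Measurable g) (a b : ℝ≥0∞) :
    ces (fun t => a * f t + b * g t) = fun x => a * ces f x + b * ces g x := by
  ext x
  rw [ces, lintegral_add_left (hf.const_mul a), lintegral_const_mul a hf,
    lintegral_const_mul b hg, ENNReal.add_div, mul_div_assoc, mul_div_assoc, ces, ces]

theorem cop_add_mul {f g : ℝ → ℝ≥0∞} (hf : Measurable f) (hg : Measurable g) (a b : ℝ≥0∞) :
    cop (fun t => a * f t + b * g t) = fun x => a * cop f x + b * cop g x := by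
  have hf' : Measurable fun t => f t / ENNReal.ofReal t := hf.div ENNReal.measurable_ofReal
  have hg' : Measurable fun t => g t / ENNReal.ofReal t := hg.div ENNReal.measurable_ofReal
  ext x
  simp only [cop, ENNReal.add_div, mul_div_assoc]
  rw [lintegral_add_left (hf'.const_mul a), lintegral_const_mul a hf', lintegral_const_mul b hg']

theorem ces_cop_add_mul {f g : ℝ → ℝ≥0∞} (hf : Measurable f) (hg : Measurable g) (a b : ℝ≥0∞) :
    ces (cop fun t => a * f t + b * g t) = fun x => a * ces (cop f) x + b * ces (cop g) x := by
  rw [cop_add_mul hf hg, ces_add_mul (cop_antitone f).measurable (cop_antitone g).measurable]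

theorem stmt9_general (φ : ℝ → ℝ → ℝ)
    (hconc : ConcaveOn ℝ (Set.Ici 0 ×ˢ Set.Ici 0) (fun q : ℝ × ℝ => φ q.1 q.2))
    (hcont : ContinuousOn (fun q : ℝ × ℝ => φ q.1 q.2) (Set.Ici 0 ×ˢ Set.Ici 0))
    (hhom : ∀ l s t : ℝ, 0 ≤ l → 0 ≤ s → 0 ≤ t → φ (l * s) (l * t) = l * φ s t)
    (hnn : ∀ s t : ℝ, 0 ≤ s → 0 ≤ t → 0 ≤ φ s t)
    (f₀ f₁ : ℝ → ℝ) (hm0 : Measurable f₀) (hm1 : Measurable f₁)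
    (h0 : ∀ t, 0 ≤ f₀ t) (h1 : ∀ t, 0 ≤ f₁ t)
    (x : ℝ)
    (hfin0 : ces (cop (fun t => ENNReal.ofReal (f₀ t))) x < ⊤)
    (hfin1 : ces (cop (fun t => ENNReal.ofReal (f₁ t))) x < ⊤) :
    ces (cop (fun t => ENNReal.ofReal (φ (f₀ t) (f₁ t)))) x
      ≤ ENNReal.ofReal
          (φ (ces (cop (fun t => ENNReal.ofReal (f₀ t))) x).toReal
             (ces (cop (fun t => ENNReal.ofReal (f₁ t))) x).toReal) := by
  set A := ces (cop fun t => ENNReal.ofReal (f₀ t)) x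
  set B := ces (cop fun t => ENNReal.ofReal (f₁ t)) x
  refine ENNReal.le_of_forall_pos_le_add fun ε hε _ => ?_
  obtain ⟨α, β, hα, hβ, hmaj, hval⟩ := exists_linear_majorant φ hconc hcont hhom hnn
    (a := A.toReal) (b := B.toReal) ENNReal.toReal_nonneg ENNReal.toReal_nonneg (NNReal.coe_pos.2 hε)
  have hpointwise : (fun t => ENNReal.ofReal (φ (f₀ t) (f₁ t))) ≤
      fun t => ENNReal.ofReal α * ENNReal.ofReal (f₀ t) + ENNReal.ofReal β * ENNReal.ofReal (f₁ t) :=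
    fun t => by
      dsimp only
      rw [← ENNReal.ofReal_mul hα, ← ENNReal.ofReal_mul hβ]
      exact (ENNReal.ofReal_le_ofReal (hmaj _ _ (h0 t) (h1 t))).trans ENNReal.ofReal_add_le
  calc _ ≤ ces (cop fun t => ENNReal.ofReal α * ENNReal.ofReal (f₀ t) +
          ENNReal.ofReal β * ENNReal.ofReal (f₁ t)) x := ces_mono (cop_mono hpointwise) x
    _ = ENNReal.ofReal (α * A.toReal + β * B.toReal) := by
      rw [ces_cop_add_mul hm0.ennreal_ofReal hm1.ennreal_ofReal, ENNReal.ofReal_add (by positivity)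
        (by positivity), ENNReal.ofReal_mul hα, ENNReal.ofReal_mul hβ,
        ENNReal.ofReal_toReal hfin0.ne, ENNReal.ofReal_toReal hfin1.ne]
    _ ≤ ENNReal.ofReal (φ A.toReal B.toReal + ε) := ENNReal.ofReal_le_ofReal hval
    _ ≤ _ := ENNReal.ofReal_add_le.trans (by simp)

/-- If `φ : [0,∞)² → [0,∞)` is concave, continuous, positively homogeneous and not
identically zero on `(0,∞)²`, `f₀, f₁ : (0,∞) → [0,∞)` are measurable, and `x > 0` with
`C(C*f₀)(x) < ∞`, `C(C*f₁)(x) < ∞`, then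
`C(C*[φ(f₀,f₁)])(x) ≤ φ(C(C*f₀)(x), C(C*f₁)(x))`. -/
theorem stmt9 (φ : ℝ → ℝ → ℝ)
    (hconc : ConcaveOn ℝ (Set.Ici 0 ×ˢ Set.Ici 0) (fun q : ℝ × ℝ => φ q.1 q.2))
    (hcont : ContinuousOn (fun q : ℝ × ℝ => φ q.1 q.2) (Set.Ici 0 ×ˢ Set.Ici 0))
    (hhom : ∀ l s t : ℝ, 0 ≤ l → 0 ≤ s → 0 ≤ t → φ (l * s) (l * t) = l * φ s t)
    (hnn : ∀ s t : ℝ, 0 ≤ s → 0 ≤ t → 0 ≤ φ s t)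
    (hnz : ∃ s t : ℝ, 0 < s ∧ 0 < t ∧ 0 < φ s t)
    (f₀ f₁ : ℝ → ℝ) (hm0 : Measurable f₀) (hm1 : Measurable f₁)
    (h0 : ∀ t, 0 ≤ f₀ t) (h1 : ∀ t, 0 ≤ f₁ t)
    (x : ℝ) (hx : 0 < x)
    (hfin0 : ces (cop (fun t => ENNReal.ofReal (f₀ t))) x < ⊤)
    (hfin1 : ces (cop (fun t => ENNReal.ofReal (f₁ t))) x < ⊤) :
    ces (cop (fun t => ENNReal.ofReal (φ (f₀ t) (f₁ t)))) x
      ≤ ENNReal.ofReal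
          (φ (ces (cop (fun t => ENNReal.ofReal (f₀ t))) x).toReal
             (ces (cop (fun t => ENNReal.ofReal (f₁ t))) x).toReal) :=
  stmt9_general φ hconc hcont hhom hnn f₀ f₁ hm0 hm1 h0 h1 x hfin0 hfin1
end

section
/- Let 1 < p₀, p₁ < ∞, 0 < θ < 1, and define p by 1/p = (1−θ)/p₀ + θ/p₁. For a measurable function f : (0,∞) → ℝ the following are equivalent: (i) the nonincreasing majorant f̃ belongs to L^p(0,∞); (ii) there exist measurable f₀, f₁ : (0,∞) → [0,∞) with f̃₀ ∈ L^{p₀}(0,∞), f̃₁ ∈ L^{p₁}(0,∞), and |f(x)| ≤ f₀(x)^{1−θ} f₁(x)^{θ} for almost every x. (That is, the Calderón product of Tandori spaces satisfies (L̃^{p₀})^{1−θ}(L̃^{p₁})^{θ} = L̃^{p}.) -/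
open MeasureTheory Set

/-- The nonincreasing majorant `f̃(x) = esssup_{t ≥ x} |f(t)|`, with values in `[0,∞]`. -/
noncomputable def maj (f : ℝ → ℝ) (x : ℝ) : ENNReal :=
  essSup (fun t => ENNReal.ofReal |f t|) (MeasureTheory.volume.restrict (Set.Ici x))

/-- Membership in the Tandori space `L̃^p(0,∞)`: `f̃ ∈ L^p(0,∞)`. -/
def memTand (p : ℝ) (f : ℝ → ℝ) : Prop :=
  (∫⁻ x in Set.Ioi (0:ℝ), maj f x ^ p) < ⊤

/- The majorant commutes with `|·| ^ r` because `x ↦ x ^ r` is an order isomorphism of `[0,∞]`,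
so `f₀ = |f| ^ (p/p₀)` and `f₁ = |f| ^ (p/p₁)` factor any `f` with `f̃ ∈ L^p`. Conversely,
`|f| ≤ f₀^{1−θ} f₁^θ` passes to the majorants, `f̃ ≤ f̃₀^{1−θ} f̃₁^θ`, and Hölder's inequality
with the weights `(1−θ)p/p₀ + θp/p₁ = 1` bounds `∫ f̃^p` by `(∫ f̃₀^{p₀})^{(1−θ)p/p₀} (∫ f̃₁^{p₁})^{θp/p₁}`. -/

theorem ENNReal.essSup_rpow {α : Type*} [MeasurableSpace α] (μ : Measure α) (g : α → ENNReal)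
    {r : ℝ} (hr : 0 < r) :
    essSup (fun t => g t ^ r) μ = essSup g μ ^ r := by
  simpa [ENNReal.orderIsoRpow] using ((ENNReal.orderIsoRpow r hr).essSup_apply g μ).symm

theorem maj_antitone (f : ℝ → ℝ) : Antitone (maj f) := fun _ _ hxy =>
  essSup_mono_measure (Measure.absolutelyContinuous_of_le
    (Measure.restrict_mono (Ici_subset_Ici.mpr hxy) le_rfl))

theorem maj_abs_rpow (f : ℝ → ℝ) {r : ℝ} (hr : 0 < r) (x : ℝ) :
    maj (fun t => |f t| ^ r) x = maj f x ^ r := by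
  unfold maj
  rw [← ENNReal.essSup_rpow _ _ hr]
  congr 1 with t
  rw [abs_of_nonneg (by positivity), ENNReal.ofReal_rpow_of_nonneg (abs_nonneg _) hr.le]

theorem memTand_abs_rpow_iff (f : ℝ → ℝ) {q r : ℝ} (hr : 0 < r) :
    memTand q (fun t => |f t| ^ r) ↔ memTand (r * q) f := by
  simp only [memTand, maj_abs_rpow f hr, ← ENNReal.rpow_mul]

theorem maj_le_rpow_mul_rpow_of_ae_le {f f₀ f₁ : ℝ → ℝ} {a b x : ℝ} (ha : 0 ≤ a) (hb : 0 ≤ b)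
    (hf₀ : ∀ t, 0 ≤ f₀ t) (hf₁ : ∀ t, 0 ≤ f₁ t)
    (h : ∀ᵐ t ∂volume.restrict (Ici x), |f t| ≤ f₀ t ^ a * f₁ t ^ b) :
    maj f x ≤ maj f₀ x ^ a * maj f₁ x ^ b := by
  refine essSup_le_of_ae_le _ ?_
  filter_upwards [h, ENNReal.ae_le_essSup (fun t => ENNReal.ofReal |f₀ t|),
    ENNReal.ae_le_essSup (fun t => ENNReal.ofReal |f₁ t|)] with t ht ht₀ ht₁
  rw [abs_of_nonneg (hf₀ t)] at ht₀
  rw [abs_of_nonneg (hf₁ t)] at ht₁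
  calc ENNReal.ofReal |f t| ≤ ENNReal.ofReal (f₀ t ^ a * f₁ t ^ b) := ENNReal.ofReal_le_ofReal ht
    _ = ENNReal.ofReal (f₀ t) ^ a * ENNReal.ofReal (f₁ t) ^ b := by
      rw [ENNReal.ofReal_mul (Real.rpow_nonneg (hf₀ t) a), ENNReal.ofReal_rpow_of_nonneg (hf₀ t) ha,
        ENNReal.ofReal_rpow_of_nonneg (hf₁ t) hb]
    _ ≤ maj f₀ x ^ a * maj f₁ x ^ b :=
      mul_le_mul' (ENNReal.rpow_le_rpow ht₀ ha) (ENNReal.rpow_le_rpow ht₁ hb)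

section Interpolation

variable {p₀ p₁ θ p : ℝ}

theorem interpolation_exponent_pos (hp₀ : 0 < p₀) (hp₁ : 0 < p₁) (hθ0 : 0 ≤ θ) (hθ1 : θ ≤ 1)
    (hp : 1 / p = (1 - θ) / p₀ + θ / p₁) : 0 < p := by
  refine one_div_pos.mp (hp ▸ ?_)
  rcases hθ0.eq_or_lt with rfl | hθ
  · simpa using hp₀
  · exact add_pos_of_nonneg_of_pos (div_nonneg (by linarith) hp₀.le) (div_pos hθ hp₁)

theorem interpolation_weights_sum (hp₀ : 0 < p₀) (hp₁ : 0 < p₁) (hpos : 0 < p)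
    (hp : 1 / p = (1 - θ) / p₀ + θ / p₁) : p / p₀ * (1 - θ) + p / p₁ * θ = 1 := by
  field_simp at hp ⊢
  linear_combination -hp

theorem exists_factorization_of_memTand (hp₀ : 0 < p₀) (hp₁ : 0 < p₁) (hpos : 0 < p)
    (hweights : p / p₀ * (1 - θ) + p / p₁ * θ = 1) {f : ℝ → ℝ} (hf : Measurable f)
    (hmem : memTand p f) :
    ∃ f₀ f₁ : ℝ → ℝ, Measurable f₀ ∧ Measurable f₁ ∧
      (∀ t, 0 ≤ f₀ t) ∧ (∀ t, 0 ≤ f₁ t) ∧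
      memTand p₀ f₀ ∧ memTand p₁ f₁ ∧
      (∀ t, |f t| ≤ f₀ t ^ (1 - θ) * f₁ t ^ θ) := by
  refine ⟨fun t => |f t| ^ (p / p₀), fun t => |f t| ^ (p / p₁),
    hf.abs.pow_const _, hf.abs.pow_const _, fun t => by positivity, fun t => by positivity,
    (memTand_abs_rpow_iff f (by positivity)).2 ?_, (memTand_abs_rpow_iff f (by positivity)).2 ?_,
    fun t => ?_⟩
  · rwa [div_mul_cancel₀ _ hp₀.ne']
  · rwa [div_mul_cancel₀ _ hp₁.ne']
  · rw [← Real.rpow_mul (abs_nonneg _), ← Real.rpow_mul (abs_nonneg _),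
      ← Real.rpow_add' (abs_nonneg _) (by simp [hweights]), hweights, Real.rpow_one]

theorem memTand_of_ae_abs_le_rpow_mul_rpow (hp₀ : 0 < p₀) (hp₁ : 0 < p₁) (hθ0 : 0 ≤ θ)
    (hθ1 : θ ≤ 1) (hpos : 0 < p) (hweights : p / p₀ * (1 - θ) + p / p₁ * θ = 1)
    {f f₀ f₁ : ℝ → ℝ} (hf₀ : ∀ t, 0 ≤ f₀ t) (hf₁ : ∀ t, 0 ≤ f₁ t)
    (hmem₀ : memTand p₀ f₀) (hmem₁ : memTand p₁ f₁)
    (hle : ∀ᵐ x ∂volume.restrict (Ioi 0), |f x| ≤ f₀ x ^ (1 - θ) * f₁ x ^ θ) :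
    memTand p f := by
  have hθ1' : 0 ≤ 1 - θ := by linarith
  have hmaj : ∀ x ∈ Ioi (0 : ℝ),
      maj f x ^ p ≤ (maj f₀ x ^ p₀) ^ (p / p₀ * (1 - θ)) * (maj f₁ x ^ p₁) ^ (p / p₁ * θ) := by
    intro x hx
    have hle_x := (Measure.absolutelyContinuous_of_le (Measure.restrict_mono
      (Ici_subset_Ioi.mpr hx) le_rfl)).ae_le hle
    calc maj f x ^ p ≤ (maj f₀ x ^ (1 - θ) * maj f₁ x ^ θ) ^ p :=
          ENNReal.rpow_le_rpow (maj_le_rpow_mul_rpow_of_ae_le hθ1' hθ0 hf₀ hf₁ hle_x) hpos.le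
      _ = _ := by
        rw [ENNReal.mul_rpow_of_nonneg _ _ hpos.le, ← ENNReal.rpow_mul, ← ENNReal.rpow_mul,
          ← ENNReal.rpow_mul, ← ENNReal.rpow_mul]
        congr 2 <;> field_simp
  calc ∫⁻ x in Ioi 0, maj f x ^ p
      ≤ ∫⁻ x in Ioi 0, (maj f₀ x ^ p₀) ^ (p / p₀ * (1 - θ)) * (maj f₁ x ^ p₁) ^ (p / p₁ * θ) :=
        setLIntegral_mono' measurableSet_Ioi hmaj
    _ ≤ (∫⁻ x in Ioi 0, maj f₀ x ^ p₀) ^ (p / p₀ * (1 - θ)) *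
        (∫⁻ x in Ioi 0, maj f₁ x ^ p₁) ^ (p / p₁ * θ) :=
      ENNReal.lintegral_mul_norm_pow_le
        ((maj_antitone f₀).measurable.pow_const _).aemeasurable
        ((maj_antitone f₁).measurable.pow_const _).aemeasurable
        (by positivity) (by positivity) hweights
    _ < ⊤ := ENNReal.mul_lt_top (ENNReal.rpow_lt_top_of_nonneg (by positivity) hmem₀.ne)
        (ENNReal.rpow_lt_top_of_nonneg (by positivity) hmem₁.ne)

end Interpolation

/-- `(L̃^{p₀})^{1−θ}(L̃^{p₁})^{θ} = L̃^p` on `(0,∞)` for `1 < p₀, p₁ < ∞`, `0 < θ < 1`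
and `1/p = (1−θ)/p₀ + θ/p₁`: `f̃ ∈ L^p` iff `|f| ≤ f₀^{1−θ} f₁^{θ}` a.e. on `(0,∞)`
for some nonnegative measurable `f₀, f₁` with `f̃₀ ∈ L^{p₀}`, `f̃₁ ∈ L^{p₁}`. -/
theorem stmt11 (p₀ p₁ θ p : ℝ) (hp₀ : 1 < p₀) (hp₁ : 1 < p₁)
    (hθ0 : 0 < θ) (hθ1 : θ < 1) (hp : 1 / p = (1 - θ) / p₀ + θ / p₁)
    (f : ℝ → ℝ) (hf : Measurable f) :
    memTand p f ↔
      ∃ f₀ f₁ : ℝ → ℝ, Measurable f₀ ∧ Measurable f₁ ∧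
        (∀ t, 0 ≤ f₀ t) ∧ (∀ t, 0 ≤ f₁ t) ∧
        memTand p₀ f₀ ∧ memTand p₁ f₁ ∧
        (∀ᵐ x ∂(MeasureTheory.volume.restrict (Set.Ioi (0:ℝ))),
          |f x| ≤ f₀ x ^ (1 - θ) * f₁ x ^ θ) := by
  have hp₀' : 0 < p₀ := by linarith
  have hp₁' : 0 < p₁ := by linarith
  have hpos := interpolation_exponent_pos hp₀' hp₁' hθ0.le hθ1.le hp
  have hweights := interpolation_weights_sum hp₀' hp₁' hpos hp
  constructor
  · intro hmem
    obtain ⟨f₀, f₁, hm₀, hm₁, hf₀, hf₁, hmem₀, hmem₁, hle⟩ :=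
      exists_factorization_of_memTand hp₀' hp₁' hpos hweights hf hmem
    exact ⟨f₀, f₁, hm₀, hm₁, hf₀, hf₁, hmem₀, hmem₁, Filter.Eventually.of_forall hle⟩
  · rintro ⟨f₀, f₁, -, -, hf₀, hf₁, hmem₀, hmem₁, hle⟩
    exact memTand_of_ae_abs_le_rpow_mul_rpow hp₀' hp₁' hθ0.le hθ1.le hpos hweights
      hf₀ hf₁ hmem₀ hmem₁ hle
end

section
/- Let a = (a_j)_{j≥1} be a sequence of nonnegative reals with ∑_{j=1}^∞ a_j/j < ∞. Then for every n ≥ 1, (C_d(C*_d a))_n = (C_d a)_n + (C*_d a)_{n+1}; equivalently, the Bennett identity C_d = (C_d − S*) C*_d holds, where (S* x)_n = x_{n+1}. -/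
open Finset

/-- The discrete Cesàro operator `(C_d a)_n = (1/n) ∑_{k=1}^n a_k`. -/
noncomputable def cesD (a : ℕ → ℝ) (n : ℕ) : ℝ :=
  (1 / (n : ℝ)) * ∑ k ∈ Finset.Icc 1 n, a k

/-- The discrete Copson operator `(C*_d a)_n = ∑_{k=n}^∞ a_k/k`. -/
noncomputable def copD (a : ℕ → ℝ) (n : ℕ) : ℝ :=
  ∑' k : ℕ, a (n + k) / ((n + k : ℕ) : ℝ)

/-!
Splitting off the first terms of the tail sum gives
`(C*_d a)_k = ∑_{j=k}^n a_j/j + (C*_d a)_{n+1}` for `k ≤ n + 1`. Summing over `1 ≤ k ≤ n` and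
exchanging the order of summation, each `a_j/j` is counted `j` times, so
`∑_{k=1}^n (C*_d a)_k = ∑_{j=1}^n a_j + n (C*_d a)_{n+1}`; divide by `n`.
-/

theorem copD_eq_sum_Ico_add {a : ℕ → ℝ} (hsum : Summable (fun j : ℕ => a j / (j : ℝ)))
    {k m : ℕ} (hkm : k ≤ m) :
    copD a k = ∑ j ∈ Ico k m, a j / (j : ℝ) + copD a m := by
  have htail : Summable (fun i : ℕ => a (k + i) / ((k + i : ℕ) : ℝ)) :=
    hsum.comp_injective (add_right_injective k)
  rw [copD, ← htail.sum_add_tsum_nat_add (m - k), sum_Ico_eq_sum_range, copD]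
  congr 1
  refine tsum_congr fun i => ?_
  rw [show k + (i + (m - k)) = m + i by omega]

theorem sum_Icc_sum_Icc_eq_sum_Icc_mul (f : ℕ → ℝ) (n : ℕ) :
    ∑ k ∈ Icc 1 n, ∑ j ∈ Icc k n, f j = ∑ j ∈ Icc 1 n, (j : ℝ) * f j := by
  rw [sum_comm' (t' := Icc 1 n) (s' := fun j => Icc 1 j)]
  · refine sum_congr rfl fun j _ => ?_
    rw [sum_const, Nat.card_Icc, nsmul_eq_mul, Nat.add_sub_cancel]
  · intro k j
    simp only [mem_Icc]
    omega

theorem sum_Icc_copD {a : ℕ → ℝ} (hsum : Summable (fun j : ℕ => a j / (j : ℝ))) (n : ℕ) :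
    ∑ k ∈ Icc 1 n, copD a k = ∑ j ∈ Icc 1 n, a j + n * copD a (n + 1) := by
  have hsplit : ∀ k ∈ Icc 1 n,
      copD a k = ∑ j ∈ Icc k n, a j / (j : ℝ) + copD a (n + 1) := fun k hk =>
    copD_eq_sum_Ico_add hsum (by simp only [mem_Icc] at hk; omega)
  rw [sum_congr rfl hsplit, sum_add_distrib, sum_Icc_sum_Icc_eq_sum_Icc_mul, sum_const,
    Nat.card_Icc, Nat.add_sub_cancel, nsmul_eq_mul]
  congr 1
  refine sum_congr rfl fun j hj => ?_
  have hj : (j : ℝ) ≠ 0 := Nat.cast_ne_zero.2 (by simp only [mem_Icc] at hj; omega)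
  field_simp

theorem stmt15_general (a : ℕ → ℝ)
    (hsum : Summable (fun j : ℕ => a j / (j : ℝ)))
    (n : ℕ) (hn : 1 ≤ n) :
    cesD (copD a) n = cesD a n + copD a (n + 1) := by
  have hn0 : (n : ℝ) ≠ 0 := Nat.cast_ne_zero.2 (by omega)
  rw [cesD, cesD, sum_Icc_copD hsum]
  field_simp

/-- For a nonnegative sequence `a = (a_j)_{j≥1}` with `∑_{j=1}^∞ a_j/j < ∞` and every
`n ≥ 1`: `(C_d(C*_d a))_n = (C_d a)_n + (C*_d a)_{n+1}`, i.e. Bennett's identity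
`C_d = (C_d − S*) C*_d`. -/
theorem stmt15 (a : ℕ → ℝ) (ha : ∀ j, 0 ≤ a j)
    (hsum : Summable (fun j : ℕ => a j / (j : ℝ)))
    (n : ℕ) (hn : 1 ≤ n) :
    cesD (copD a) n = cesD a n + copD a (n + 1) :=
  stmt15_general a hsum n hn
end

section
/- Let f : (0,∞) → [0,∞) be defined by f(x) = 1/(x · (ln(1/x))^3) for x ∈ (0, 1/e) and f(x) = 0 for x ≥ 1/e. Then: (i) ∫_0^∞ f(x) dx = 1/2 (so f ∈ L^1(0,∞)); (ii) Cf(x) = 1/(2x (ln x)^2) for x ∈ (0, 1/e] and Cf(x) = 1/(2x) for x > 1/e; (iii) esssup_{x>0} Cf(x) = ∞, i.e., Cf ∉ L^∞(0,∞); and (iv) Cf can be written as g₀ + g₁ with g₀ ∈ L^1(0,∞) and g₁ ∈ L^∞(0,∞) (e.g. g₀ = Cf·χ_{(0,1/e]}, g₁ = Cf·χ_{(1/e,∞)}). In particular f belongs to C(L^1 + L^∞)(0,∞) but not to C(L^∞)(0,∞), so C(L^1) + C(L^∞) = C(L^∞) ⊊ C(L^1 + L^∞) on [0,∞). -/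
/-!
On `(0, 1/e)` the function `f` is the derivative of `F(t) = 1/(2 (log t)²)`, and `F(t) → 0` as
`t → 0⁺`; hence `∫₀ˣ f = F(x)` for `x ≤ 1/e` and `∫₀ˣ f = F(1/e) = 1/2` for larger `x`.
Near `0`, `Cf(x) = 1/(2x (log x)²)` blows up because `x (log x)² → 0`, so `Cf` is not
essentially bounded. Yet `1/(2x (log x)²)` is itself the derivative of `-1/(2 log x)`, which
also vanishes at `0⁺`, so `Cf` is integrable on `(0, 1/e]`; beyond `1/e` it is at most `e/2`.
-/

open MeasureTheory Set

/-- `f(x) = 1/(x·(ln(1/x))³)` for `x ∈ (0, 1/e)` and `f(x) = 0` otherwise. -/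
noncomputable def f19 : ℝ → ℝ := fun x =>
  if x ∈ Set.Ioo 0 (Real.exp (-1)) then 1 / (x * Real.log (1 / x) ^ 3) else 0

/-- The Cesàro transform of `f19`: `Cf(x) = (1/x)∫_0^x f(t) dt`, in `[0,∞]`. -/
noncomputable def cesF19 : ℝ → ENNReal := fun x =>
  (∫⁻ t in Set.Ioo 0 x, ENNReal.ofReal (f19 t)) / ENNReal.ofReal x

open Filter Topology

theorem lintegral_Ioo_ofReal_eq_sub_of_hasDerivAt_of_tendsto {F F' : ℝ → ℝ} {a b L : ℝ}
    (hab : a < b) (hderiv : ∀ x ∈ Ioc a b, HasDerivAt F (F' x) x)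
    (hpos : ∀ x ∈ Ioo a b, 0 ≤ F' x) (hlim : Tendsto F (𝓝[>] a) (𝓝 L)) :
    ∫⁻ x in Ioo a b, ENNReal.ofReal (F' x) = ENNReal.ofReal (F b - L) := by
  classical
  -- Redefining `F a` as the limit `L` makes the ordinary FTC on `[a, b]` applicable.
  set G := Function.update F a L
  have hGcont : ContinuousOn G (Icc a b) := by
    refine continuousOn_update_iff.2 ⟨?_, fun _ => ?_⟩ <;> rw [Icc_sdiff_left]
    · exact fun x hx => (hderiv x hx).continuousAt.continuousWithinAt
    · exact hlim.mono_left (nhdsWithin_mono _ Ioc_subset_Ioi_self)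
  have hGderiv : ∀ x ∈ Ioo a b, HasDerivAt G (F' x) x := fun x hx =>
    (hderiv x (Ioo_subset_Ioc_self hx)).congr_of_eventuallyEq <|
      (eventually_ne_nhds hx.1.ne').mono fun y hy => Function.update_of_ne hy ..
  have hint : IntegrableOn F' (Ioc a b) :=
    intervalIntegral.integrableOn_deriv_of_nonneg hGcont hGderiv hpos
  have hGb : G b = F b := Function.update_of_ne hab.ne' ..
  have hGa : G a = L := Function.update_self ..
  rw [← ofReal_integral_eq_lintegral_ofReal (hint.mono_set Ioo_subset_Ioc_self)
    ((ae_restrict_iff' measurableSet_Ioo).2 (Eventually.of_forall hpos)),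
    integral_Ioc_eq_integral_Ioo.symm, ← intervalIntegral.integral_of_le hab.le,
    intervalIntegral.integral_eq_sub_of_hasDerivAt_of_le hab.le hGcont hGderiv
      ((intervalIntegrable_iff_integrableOn_Ioc_of_le hab.le).2 hint), hGb, hGa]

theorem hasDerivAt_one_div_two_mul_log_sq {t : ℝ} (ht : Real.log t ≠ 0) :
    HasDerivAt (fun t => 1 / (2 * Real.log t ^ 2)) (1 / (t * Real.log (1 / t) ^ 3)) t := by
  have ht0 : t ≠ 0 := by rintro rfl; simp at ht
  have h := (((Real.hasDerivAt_log ht0).fun_pow 2).const_mul 2).fun_inv (by positivity)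
  simp only [one_div] at h ⊢
  refine h.congr_deriv ?_
  rw [Real.log_inv]
  field_simp
  ring

theorem hasDerivAt_neg_one_div_two_mul_log {t : ℝ} (ht : Real.log t ≠ 0) :
    HasDerivAt (fun t => -(1 / (2 * Real.log t))) (1 / (2 * t * Real.log t ^ 2)) t := by
  have ht0 : t ≠ 0 := by rintro rfl; simp at ht
  have h := (((Real.hasDerivAt_log ht0).const_mul 2).fun_inv (by positivity)).neg
  simp only [one_div] at h ⊢
  refine h.congr_deriv ?_
  field_simp

theorem tendsto_one_div_two_mul_log_sq_nhdsGT_zero :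
    Tendsto (fun t => 1 / (2 * Real.log t ^ 2)) (𝓝[>] 0) (𝓝 0) := by
  have h := Real.tendsto_log_nhdsGT_zero
  simpa only [one_div, sq, Function.comp_def] using tendsto_inv_atTop_zero.comp
    ((h.atBot_mul_atBot₀ h).const_mul_atTop two_pos)

theorem tendsto_neg_one_div_two_mul_log_nhdsGT_zero :
    Tendsto (fun t => -(1 / (2 * Real.log t))) (𝓝[>] 0) (𝓝 0) := by
  simpa only [one_div, Function.comp_def, mul_neg, inv_neg] using tendsto_inv_atTop_zero.comp
    ((tendsto_neg_atBot_atTop.comp Real.tendsto_log_nhdsGT_zero).const_mul_atTop two_pos)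

theorem f19_of_mem {t : ℝ} (ht : t ∈ Ioo 0 (Real.exp (-1))) :
    f19 t = 1 / (t * Real.log (1 / t) ^ 3) :=
  if_pos ht

theorem support_ofReal_f19_subset :
    (fun t => ENNReal.ofReal (f19 t)).support ⊆ Ioo 0 (Real.exp (-1)) := fun t ht => by
  by_contra h
  exact ht (by simp [f19, h])

theorem lintegral_Ioo_f19_of_le {x : ℝ} (hx0 : 0 < x) (hx : x ≤ Real.exp (-1)) :
    ∫⁻ t in Ioo 0 x, ENNReal.ofReal (f19 t) = ENNReal.ofReal (1 / (2 * Real.log x ^ 2)) := by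
  have hx1 : x < 1 := hx.trans_lt (Real.exp_lt_one_iff.2 (by norm_num))
  have hlog : ∀ t ∈ Ioc 0 x, Real.log t < 0 := fun t ht => Real.log_neg ht.1 (ht.2.trans_lt hx1)
  calc ∫⁻ t in Ioo 0 x, ENNReal.ofReal (f19 t)
      = ∫⁻ t in Ioo 0 x, ENNReal.ofReal (1 / (t * Real.log (1 / t) ^ 3)) :=
        setLIntegral_congr_fun measurableSet_Ioo fun t ht => by
          rw [f19_of_mem ⟨ht.1, ht.2.trans_le hx⟩]
    _ = ENNReal.ofReal (1 / (2 * Real.log x ^ 2) - 0) := by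
        refine lintegral_Ioo_ofReal_eq_sub_of_hasDerivAt_of_tendsto hx0
          (fun t ht => hasDerivAt_one_div_two_mul_log_sq (hlog t ht).ne)
          (fun t ht => ?_) tendsto_one_div_two_mul_log_sq_nhdsGT_zero
        have : 0 < Real.log (1 / t) := by
          rw [one_div, Real.log_inv]; linarith [hlog t (Ioo_subset_Ioc_self ht)]
        have := ht.1
        positivity
    _ = ENNReal.ofReal (1 / (2 * Real.log x ^ 2)) := by rw [sub_zero]

theorem setLIntegral_f19_of_subset {s : Set ℝ} (hs : Ioo 0 (Real.exp (-1)) ⊆ s) :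
    ∫⁻ t in s, ENNReal.ofReal (f19 t) = ENNReal.ofReal (1 / 2) := by
  rw [setLIntegral_eq_of_support_subset (support_ofReal_f19_subset.trans hs),
    ← setLIntegral_eq_of_support_subset support_ofReal_f19_subset,
    lintegral_Ioo_f19_of_le (Real.exp_pos _) le_rfl, Real.log_exp]
  norm_num

theorem cesF19_of_mem_Ioc {x : ℝ} (hx : x ∈ Ioc 0 (Real.exp (-1))) :
    cesF19 x = ENNReal.ofReal (1 / (2 * x * Real.log x ^ 2)) := by
  rw [cesF19, lintegral_Ioo_f19_of_le hx.1 hx.2, ← ENNReal.ofReal_div_of_pos hx.1]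
  congr 1
  field_simp

theorem cesF19_of_gt {x : ℝ} (hx : Real.exp (-1) < x) :
    cesF19 x = ENNReal.ofReal (1 / (2 * x)) := by
  rw [cesF19, setLIntegral_f19_of_subset (Ioo_subset_Ioo_right hx.le),
    ← ENNReal.ofReal_div_of_pos ((Real.exp_pos _).trans hx)]
  congr 1
  field_simp

theorem cesF19_le_of_gt {x : ℝ} (hx : Real.exp (-1) < x) :
    cesF19 x ≤ ENNReal.ofReal (Real.exp 1 / 2) := by
  rw [cesF19_of_gt hx]
  refine ENNReal.ofReal_le_ofReal ?_
  calc 1 / (2 * x) ≤ 1 / (2 * Real.exp (-1)) := by gcongr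
    _ = Real.exp 1 / 2 := by rw [Real.exp_neg]; field_simp

theorem setLIntegral_Ioc_cesF19 :
    ∫⁻ x in Ioc 0 (Real.exp (-1)), cesF19 x = ENNReal.ofReal (1 / 2) := by
  have hb1 : Real.exp (-1) < 1 := Real.exp_lt_one_iff.2 (by norm_num)
  have hlog : ∀ t ∈ Ioc 0 (Real.exp (-1)), Real.log t < 0 := fun t ht =>
    Real.log_neg ht.1 (ht.2.trans_lt hb1)
  rw [setLIntegral_congr_fun measurableSet_Ioc fun x hx => cesF19_of_mem_Ioc hx,
    ← setLIntegral_congr Ioo_ae_eq_Ioc,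
    lintegral_Ioo_ofReal_eq_sub_of_hasDerivAt_of_tendsto (Real.exp_pos _)
      (fun t ht => hasDerivAt_neg_one_div_two_mul_log (hlog t ht).ne)
      (fun t ht => ?_) tendsto_neg_one_div_two_mul_log_nhdsGT_zero, Real.log_exp]
  · norm_num
  · have := hlog t (Ioo_subset_Ioc_self ht)
    have := ht.1
    positivity

theorem tendsto_two_mul_mul_log_sq_nhdsGT_zero :
    Tendsto (fun x => 2 * x * Real.log x ^ 2) (𝓝[>] 0) (𝓝[>] 0) := by
  refine tendsto_nhdsWithin_iff.2 ⟨?_, ?_⟩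
  · have h := tendsto_log_mul_rpow_nhdsGT_zero (r := 1 / 2) one_half_pos
    have h2 := (h.mul h).const_mul 2
    rw [mul_zero, mul_zero] at h2
    refine h2.congr' (eventually_mem_nhdsWithin.mono fun x (hx : 0 < x) => ?_)
    rw [← Real.sqrt_eq_rpow]
    linear_combination 2 * Real.log x ^ 2 * Real.sq_sqrt hx.le
  · filter_upwards [Ioo_mem_nhdsGT one_pos] with x hx
    have := (Real.log_neg hx.1 hx.2).ne
    have := hx.1
    show 0 < 2 * x * Real.log x ^ 2
    positivity

theorem tendsto_cesF19_nhdsGT_zero : Tendsto cesF19 (𝓝[>] 0) (𝓝 ⊤) := by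
  refine (ENNReal.tendsto_ofReal_atTop.comp (tendsto_inv_nhdsGT_zero.comp
    tendsto_two_mul_mul_log_sq_nhdsGT_zero)).congr' ?_
  filter_upwards [Ioo_mem_nhdsGT (Real.exp_pos (-1))] with x hx
  rw [cesF19_of_mem_Ioc (Ioo_subset_Ioc_self hx), Function.comp_apply, Function.comp_apply, one_div]

theorem essSup_restrict_Ioi_eq_top_of_tendsto {g : ℝ → ENNReal} {a : ℝ}
    (h : Tendsto g (𝓝[>] a) (𝓝 ⊤)) : essSup g (volume.restrict (Ioi a)) = ⊤ := by
  by_contra hC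
  obtain ⟨u, hau, hu⟩ := mem_nhdsGT_iff_exists_Ioo_subset.1
    (h.eventually (lt_mem_nhds (lt_top_iff_ne_top.2 hC)))
  have hnull : volume.restrict (Ioi a) (Ioo a u) = 0 := measure_mono_null hu meas_essSup_lt
  rw [Measure.restrict_apply' measurableSet_Ioi, inter_eq_left.2 Ioo_subset_Ioi_self,
    Real.volume_Ioo, ENNReal.ofReal_eq_zero] at hnull
  exact (sub_pos.2 hau).not_ge hnull

/-- For `f(x) = 1/(x(ln(1/x))³)·χ_{(0,1/e)}(x)`:
(i) `∫_0^∞ f = 1/2`, so `f ∈ L^1(0,∞)`;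
(ii) `Cf(x) = 1/(2x(ln x)²)` for `x ∈ (0,1/e]` and `Cf(x) = 1/(2x)` for `x > 1/e`;
(iii) `esssup_{x>0} Cf(x) = ∞`, i.e. `Cf ∉ L^∞(0,∞)`;
(iv) `Cf = g₀ + g₁` on `(0,∞)` with `g₀ ∈ L^1(0,∞)` and `g₁ ∈ L^∞(0,∞)`.
Hence `f ∈ C(L^1 + L^∞)(0,∞)` but `f ∉ C(L^∞)(0,∞)`. -/
theorem stmt19 :
    (∫⁻ x in Set.Ioi (0:ℝ), ENNReal.ofReal (f19 x)) = ENNReal.ofReal (1 / 2) ∧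
    (∀ x ∈ Set.Ioc (0:ℝ) (Real.exp (-1)),
      cesF19 x = ENNReal.ofReal (1 / (2 * x * Real.log x ^ 2))) ∧
    (∀ x : ℝ, Real.exp (-1) < x → cesF19 x = ENNReal.ofReal (1 / (2 * x))) ∧
    essSup cesF19 (MeasureTheory.volume.restrict (Set.Ioi (0:ℝ))) = ⊤ ∧
    ∃ g₀ g₁ : ℝ → ENNReal,
      (∀ x ∈ Set.Ioi (0:ℝ), cesF19 x = g₀ x + g₁ x) ∧
      (∫⁻ x in Set.Ioi (0:ℝ), g₀ x) < ⊤ ∧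
      ∃ M : ℝ, 0 ≤ M ∧ ∀ x ∈ Set.Ioi (0:ℝ), g₁ x ≤ ENNReal.ofReal M := by
  refine ⟨setLIntegral_f19_of_subset Ioo_subset_Ioi_self, fun x hx => cesF19_of_mem_Ioc hx,
    fun x hx => cesF19_of_gt hx, essSup_restrict_Ioi_eq_top_of_tendsto tendsto_cesF19_nhdsGT_zero,
    (Ioc 0 (Real.exp (-1))).indicator cesF19, (Ioi (Real.exp (-1))).indicator cesF19,
    fun x hx => ?_, ?_, Real.exp 1 / 2, by positivity,
    fun x _ => indicator_apply_le' (fun hx => cesF19_le_of_gt hx) fun _ => zero_le⟩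
  · rw [← Ioc_union_Ioi_eq_Ioi (Real.exp_pos (-1)).le] at hx
    rw [← indicator_of_mem hx cesF19, indicator_union_of_disjoint (Ioc_disjoint_Ioi le_rfl)]
  · rw [lintegral_indicator measurableSet_Ioc, Measure.restrict_restrict measurableSet_Ioc,
      inter_eq_left.2 Ioc_subset_Ioi_self, setLIntegral_Ioc_cesF19]
    exact ENNReal.ofReal_lt_top
end
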